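/- arXiv:1504.07813 — 9 statements merged into one kernel-verified Lean document; each statement's English description precedes it below -/
import Mathlib

section
/- Let Δ^L(Y) be the determinant of the d×d submatrix of x^L(Y) with rows ι(R) and columns 1,…,d, and let Δ^G(t,a;Y) be the determinant of the d×d submatrix of h(t,a)·x^L(Y) with rows ι(R) and columns 1,…,d. Then Δ^G(t,a;Y) = t^{a_r − a_{m′} − a_{d−r+m′}}·Δ^L(Y) if m′+d > r, and Δ^G(t,a;Y) = t^{a_{m′+d} − a_{m′}}·Δ^L(Y) if m′+d ≤ r. -/
noncomputable section
open Matrix BigOperators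

namespace CTypeMinors

/-- Standard basis vector of `ℂ^{2r}`, indexed by a natural number `a` (0-indexed):
`a = j - 1` encodes the unbarred element `j ∈ J`, and `a = 2r - j` encodes the barred
element `j̄ ∈ J` (this is the bijection `ι` shifted to be 0-indexed; the natural order
on `{0, …, 2r-1}` corresponds to the total order on `J`). -/
def vv (r a : ℕ) : Fin (2*r) → ℂ := fun k => if (k : ℕ) = a then 1 else 0

/-- `v_j` for unbarred `j` (`1 ≤ j ≤ r`); note `vu r (r+1) = v_{r̄}`. -/
def vu (r j : ℕ) : Fin (2*r) → ℂ := vv r (j - 1)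

/-- `v_{j̄}` for barred `j̄` (`1 ≤ j ≤ r`). -/
def vb (r j : ℕ) : Fin (2*r) → ℂ := vv r (2*r - j)

/-- The matrix `f_i` (`1 ≤ i ≤ r`): `f_i v_i = v_{i+1}`, `f_i v_{(i+1)‾} = v_{ī}`
(for `i = r` these two conditions both read `f_r v_r = v_{r̄}`), all other basis
vectors are sent to `0`. -/
def fMat (r i : ℕ) : Matrix (Fin (2*r)) (Fin (2*r)) ℂ :=
  Matrix.of fun k l =>
    if ((l : ℕ) + 1 = i ∧ (k : ℕ) = i) ∨ ((l : ℕ) + i + 1 = 2*r ∧ (k : ℕ) + i = 2*r)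
    then 1 else 0

/-- `e_i = f_iᵀ`. -/
def eMat (r i : ℕ) : Matrix (Fin (2*r)) (Fin (2*r)) ℂ := (fMat r i)ᵀ

/-- `x_i(t) = 1 + t e_i`. -/
def xMat (r i : ℕ) (t : ℂ) : Matrix (Fin (2*r)) (Fin (2*r)) ℂ := 1 + t • eMat r i

/-- `y_i(t) = 1 + t f_i`. -/
def yMat (r i : ℕ) (t : ℂ) : Matrix (Fin (2*r)) (Fin (2*r)) ℂ := 1 + t • fMat r i

/-- `α_i^∨(c)`: diagonal, acting by `c` on `v_i, v_{(i+1)‾}`, by `c⁻¹` on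
`v_{i+1}, v_{ī}`, and by `1` elsewhere (for `i = r`: by `c` on `v_r`, `c⁻¹` on `v_{r̄}`). -/
def alMat (r i : ℕ) (c : ℂ) : Matrix (Fin (2*r)) (Fin (2*r)) ℂ :=
  Matrix.diagonal fun k =>
    if (k : ℕ) + 1 = i ∨ (k : ℕ) + i + 1 = 2*r then c
    else if (k : ℕ) = i ∨ (k : ℕ) + i = 2*r then c⁻¹
    else 1

/-- `x_{-i}(t) = y_i(t) ⬝ α_i^∨(t⁻¹)`. -/
def xmMat (r i : ℕ) (t : ℂ) : Matrix (Fin (2*r)) (Fin (2*r)) ℂ :=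
  yMat r i t * alMat r i t⁻¹

/-- Entry of a `2r × 2r` matrix at (0-indexed) natural number indices. -/
def ent {r : ℕ} (X : Matrix (Fin (2*r)) (Fin (2*r)) ℂ) (a b : ℕ) : ℂ :=
  dotProduct (vv r a) (X.mulVec (vv r b))

/-- Ordered product `g 1 * g 2 * ⋯ * g n` of matrices. -/
def oprod {N : ℕ} (g : ℕ → Matrix (Fin N) (Fin N) ℂ) (n : ℕ) : Matrix (Fin N) (Fin N) ℂ :=
  ((List.range n).map fun l => g (l + 1)).prod

/-- `x^L(Y) = (x_{-1}(Y_{1,1})⋯x_{-r}(Y_{1,r})) ⋯ x_{-1}(Y_{m,1})⋯x_{-d}(Y_{m,d})`. -/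
def xL (r m d : ℕ) (Y : ℕ → ℕ → ℂ) : Matrix (Fin (2*r)) (Fin (2*r)) ℂ :=
  oprod (fun s => oprod (fun l => xmMat r l (Y s l)) (if s = m then d else r)) m

/-- The 0-indexed row `ι(R_i)` for `i : Fin d` (0-indexed `i`): the `i`-th entry
of `R` is `v_{m'+1+i}` when `(i+1) + m' ≤ r` and `v_{(d-i)‾}` otherwise. -/
def rowR (r m' d i : ℕ) : ℕ := if i + 1 + m' ≤ r then m' + i else 2*r + i - d

/-- `Δ^L(Y)`: determinant of the `d × d` submatrix of `x^L(Y)` with rows `ι(R)` and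
columns `1, …, d`. -/
def DeltaL (r m m' d : ℕ) (Y : ℕ → ℕ → ℂ) : ℂ :=
  (Matrix.of fun i j : Fin d => ent (xL r m d Y) (rowR r m' d (i : ℕ)) (j : ℕ)).det

/-- `C̄(l,k) = Y_{l,k-1}/Y_{l,k}`. -/
def Cbar (Y : ℕ → ℕ → ℂ) (l k : ℕ) : ℂ := Y l (k - 1) / Y l k

/-- `C(l,k) = Y_{l,k+1}/Y_{l+1,k}`. -/
def Cc (Y : ℕ → ℕ → ℂ) (l k : ℕ) : ℂ := Y l (k + 1) / Y (l + 1) k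

/-- `|·| : J → ℕ` in the 0-indexed natural encoding of `J`. -/
def absV (r p : ℕ) : ℕ := if p < r then p + 1 else 2*r - p


/-- The torus element `h(t,a) = t^{Σ_i a_i h_i}` in the vector representation:
diagonal, acting by `t^{a_j - a_{j-1}}` on `v_j` and by `t^{a_{j-1} - a_j}` on `v_{j̄}`
(`1 ≤ j ≤ r`, with `a_0 = 0`). -/
def hMat (r : ℕ) (t : ℂ) (a : ℕ → ℤ) : Matrix (Fin (2*r)) (Fin (2*r)) ℂ :=
  Matrix.diagonal fun k =>
    if (k : ℕ) < r then t ^ (a ((k : ℕ) + 1) - a (k : ℕ))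
    else t ^ (a (2*r - (k : ℕ) - 1) - a (2*r - (k : ℕ)))

/-- `Δ^G(t,a;Y)`: determinant of the `d × d` submatrix of `h(t,a)·x^L(Y)` with rows
`ι(R)` and columns `1, …, d`. -/
def DeltaG (r m m' d : ℕ) (t : ℂ) (a : ℕ → ℤ) (Y : ℕ → ℕ → ℂ) : ℂ :=
  (Matrix.of fun i j : Fin d =>
    ent (hMat r t a * xL r m d Y) (rowR r m' d (i : ℕ)) (j : ℕ)).det

lemma vv_eq_single {r c : ℕ} (hc : c < 2*r) :
    vv r c = Pi.single (⟨c, hc⟩ : Fin (2*r)) (1 : ℂ) := by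
  funext k
  simp only [vv, Pi.single_apply, Fin.ext_iff]

lemma ent_eq {r : ℕ} (X : Matrix (Fin (2*r)) (Fin (2*r)) ℂ) {a b : ℕ}
    (ha : a < 2*r) (hb : b < 2*r) : ent X a b = X ⟨a, ha⟩ ⟨b, hb⟩ := by
  rw [ent, vv_eq_single ha, vv_eq_single hb, Matrix.mulVec_single]
  simp [single_dotProduct]

lemma prod_zpow_eq {t : ℂ} (ht : t ≠ 0) {ι : Type*} (s : Finset ι) (E : ι → ℤ) :
    ∏ i ∈ s, t ^ (E i) = t ^ (∑ i ∈ s, E i) := by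
  classical
  induction s using Finset.cons_induction with
  | empty => simp
  | cons i s hi ih =>
    rw [Finset.prod_cons, Finset.sum_cons, ih, zpow_add₀ ht]

/- **Statement 2** (Proposition 5.3): `Δ^G(t,a;Y) = t^{a_r - a_{m'} - a_{d-r+m'}}·Δ^L(Y)`
if `m'+d > r`, and `Δ^G(t,a;Y) = t^{a_{m'+d} - a_{m'}}·Δ^L(Y)` if `m'+d ≤ r`. -/
theorem deltaG_eq_deltaL
    (r m m' d : ℕ) (hr : 2 ≤ r) (hm'1 : 1 ≤ m') (hm'm : m' ≤ m) (hmr : m ≤ r)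
    (hd1 : 1 ≤ d) (hdr : d ≤ r)
    (t : ℂ) (ht : t ≠ 0) (a : ℕ → ℤ) (ha0 : a 0 = 0)
    (Y : ℕ → ℕ → ℂ)
    (hY0 : ∀ s, Y s 0 = 1) (hYr1 : ∀ s, Y s (r+1) = 1) (hYm : ∀ l, d < l → Y m l = 1)
    (hYne : ∀ s l, 1 ≤ s → s ≤ m → 1 ≤ l → l ≤ r → Y s l ≠ 0) :
    (r < m' + d →
      DeltaG r m m' d t a Y = t ^ (a r - a m' - a (d + m' - r)) * DeltaL r m m' d Y) ∧
    (m' + d ≤ r →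
      DeltaG r m m' d t a Y = t ^ (a (m' + d) - a m') * DeltaL r m m' d Y) := by
  set E : ℕ → ℤ := fun i =>
    if i + 1 + m' ≤ r then a (m' + i + 1) - a (m' + i) else a (d - i - 1) - a (d - i)
    with hE
  have hrow : ∀ i : Fin d, rowR r m' d (i : ℕ) < 2*r := by
    intro i; have := i.isLt; unfold rowR; split <;> omega
  have hcol : ∀ j : Fin d, (j : ℕ) < 2*r := by
    intro j; have := j.isLt; omega
  have key : DeltaG r m m' d t a Y =
      t ^ (∑ i ∈ Finset.range d, E i) * DeltaL r m m' d Y := by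
    have hent : ∀ i j : Fin d,
        ent (hMat r t a * xL r m d Y) (rowR r m' d (i : ℕ)) (j : ℕ)
          = t ^ (E (i : ℕ)) * ent (xL r m d Y) (rowR r m' d (i : ℕ)) (j : ℕ) := by
      intro i j
      rw [ent_eq _ (hrow i) (hcol j), ent_eq _ (hrow i) (hcol j),
        hMat, Matrix.diagonal_mul]
      congr 1
      have hi := i.isLt
      by_cases hc : (i : ℕ) + 1 + m' ≤ r
      · have h1 : rowR r m' d (i : ℕ) = m' + (i : ℕ) := by unfold rowR; rw [if_pos]; omega
        simp only [h1, hE]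
        rw [if_pos (by omega : m' + (i : ℕ) < r), if_pos hc]
      · have h1 : rowR r m' d (i : ℕ) = 2*r + (i : ℕ) - d := by
          unfold rowR; rw [if_neg]; omega
        simp only [h1, hE]
        rw [if_neg (by omega : ¬ 2*r + (i : ℕ) - d < r), if_neg hc,
          show 2*r - (2*r + (i : ℕ) - d) - 1 = d - (i : ℕ) - 1 by omega,
          show 2*r - (2*r + (i : ℕ) - d) = d - (i : ℕ) by omega]
    have hmat : (Matrix.of fun i j : Fin d =>
        ent (hMat r t a * xL r m d Y) (rowR r m' d (i : ℕ)) (j : ℕ))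
        = Matrix.of fun i j : Fin d => (t ^ (E (i : ℕ))) *
            (Matrix.of fun i j : Fin d =>
              ent (xL r m d Y) (rowR r m' d (i : ℕ)) (j : ℕ)) i j := by
      ext i j
      simp only [Matrix.of_apply]
      exact hent i j
    rw [DeltaG, hmat, Matrix.det_mul_column, ← DeltaL]
    congr 1
    rw [Fin.prod_univ_eq_prod_range (fun i => t ^ E i) d, prod_zpow_eq ht]
  constructor
  · -- case r < m' + d
    intro hcase
    rw [key]
    congr 2
    have hi0 : r - m' ≤ d := by omega
    rw [Finset.range_eq_Ico, ← Finset.sum_Ico_consecutive E (Nat.zero_le (r - m')) hi0]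
    have h1 : ∑ i ∈ Finset.Ico 0 (r - m'), E i = a r - a m' := by
      rw [← Finset.range_eq_Ico]
      have : ∀ i ∈ Finset.range (r - m'), E i = a (m' + (i+1)) - a (m' + i) := by
        intro i hi
        simp only [Finset.mem_range] at hi
        simp only [hE]
        rw [if_pos (by omega)]
        rfl
      rw [Finset.sum_congr rfl this, Finset.sum_range_sub (fun i => a (m' + i)) (r - m'),
        show m' + (r - m') = r by omega, Nat.add_zero]
    have h2 : ∑ i ∈ Finset.Ico (r - m') d, E i = - a (d + m' - r) := by
      rw [Finset.sum_Ico_eq_sum_range]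
      have : ∀ j ∈ Finset.range (d - (r - m')),
          E (r - m' + j) = a (d - (r - m') - (j+1)) - a (d - (r - m') - j) := by
        intro j hj
        simp only [Finset.mem_range] at hj
        simp only [hE]
        rw [if_neg (by omega)]
        congr 2 <;> omega
      rw [Finset.sum_congr rfl this,
        Finset.sum_range_sub (fun j => a (d - (r - m') - j)) (d - (r - m'))]
      have e1 : d - (r - m') - (d - (r - m')) = 0 := by omega
      have e2 : d - (r - m') - 0 = d + m' - r := by omega
      rw [e1, e2, ha0]
      ring
    rw [h1, h2]
    ring
  · -- case m' + d ≤ r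
    intro hcase
    rw [key]
    congr 2
    have : ∀ i ∈ Finset.range d, E i = a (m' + (i+1)) - a (m' + i) := by
      intro i hi
      simp only [Finset.mem_range] at hi
      simp only [hE]
      rw [if_pos (by omega)]
      rfl
    rw [Finset.sum_congr rfl this, Finset.sum_range_sub (fun i => a (m' + i)) d,
      Nat.add_zero]

end CTypeMinors
end
end

section
/- Let ū := (s̄_1 s̄_2 ⋯ s̄_r)^{m′−1}·s̄_1 s̄_2 ⋯ s̄_d ∈ M_{2r}(ℂ). Then the induced map Λ^d(ū) on the d-th exterior power Λ^d ℂ^{2r} satisfies: Λ^d(ū)(v_1 ∧ v_2 ∧ ⋯ ∧ v_d) = v_{m′+1} ∧ v_{m′+2} ∧ ⋯ ∧ v_{m′+d} if m′+d ≤ r, and Λ^d(ū)(v_1 ∧ v_2 ∧ ⋯ ∧ v_d) = v_{m′+1} ∧ ⋯ ∧ v_r ∧ v_{(d−r+m′)‾} ∧ v_{(d−r+m′−1)‾} ∧ ⋯ ∧ v_{1̄} if m′+d > r. -/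
noncomputable section
open Matrix BigOperators

namespace CTypeMinors

/-- `s̄_i = x_i(-1) y_i(1) x_i(-1)`. -/
def sbar (r i : ℕ) : Matrix (Fin (2*r)) (Fin (2*r)) ℂ :=
  xMat r i (-1) * yMat r i 1 * xMat r i (-1)

set_option synthInstance.maxHeartbeats 1000000
set_option maxHeartbeats 1000000

lemma vv_congr {r : ℕ} {a b : ℕ} (h : a = b) : vv r a = vv r b := by rw [h]

lemma nvv_congr {r : ℕ} {a b : ℕ} (h : a = b) : -vv r a = -vv r b := by rw [h]

lemma vv_eq_zero {r a : ℕ} (h : 2*r ≤ a) : vv r a = 0 := by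
  funext k
  simp only [vv, Pi.zero_apply, ite_eq_right_iff]
  intro hk; exfalso; have := k.isLt; omega

lemma mulVec_vv {r : ℕ} (M : Matrix (Fin (2*r)) (Fin (2*r)) ℂ) (p : ℕ) (hp : p < 2*r) :
    M *ᵥ vv r p = fun k => M k ⟨p, hp⟩ := by
  funext k
  simp only [Matrix.mulVec, dotProduct, vv]
  rw [Finset.sum_eq_single (⟨p, hp⟩ : Fin (2*r))]
  · simp
  · intro b _ hb
    rw [if_neg, mul_zero]
    exact fun h => hb (Fin.ext h)
  · intro h; exact absurd (Finset.mem_univ _) h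

lemma fMat_mulVec (r i p : ℕ) (hi1 : 1 ≤ i) (hir : i ≤ r) :
    fMat r i *ᵥ vv r p =
      if p + 1 = i then vv r i
      else if p + i + 1 = 2*r then vv r (2*r - i) else 0 := by
  by_cases hp : p < 2*r
  · rw [mulVec_vv _ p hp]
    funext k
    have hk := k.isLt
    simp only [fMat, Matrix.of_apply, vv, ite_apply, Pi.zero_apply]
    split_ifs <;> first | rfl | (exfalso; omega)
  · rw [vv_eq_zero (by omega), Matrix.mulVec_zero]
    rw [if_neg (by omega), if_neg (by omega)]

lemma eMat_mulVec (r i p : ℕ) (hi1 : 1 ≤ i) (hir : i ≤ r) :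
    eMat r i *ᵥ vv r p =
      if p = i then vv r (i - 1)
      else if p + i = 2*r then vv r (2*r - i - 1) else 0 := by
  by_cases hp : p < 2*r
  · rw [mulVec_vv _ p hp]
    funext k
    have hk := k.isLt
    simp only [eMat, fMat, Matrix.transpose_apply, Matrix.of_apply, vv, ite_apply, Pi.zero_apply]
    split_ifs <;> first | rfl | (exfalso; omega)
  · rw [vv_eq_zero (by omega), Matrix.mulVec_zero]
    rw [if_neg (by omega), if_neg (by omega)]


lemma xMat_mulVec (r i : ℕ) (t : ℂ) (w : Fin (2*r) → ℂ) :
    xMat r i t *ᵥ w = w + t • (eMat r i *ᵥ w) := by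
  simp [xMat, Matrix.add_mulVec, Matrix.one_mulVec, Matrix.smul_mulVec]

lemma yMat_mulVec (r i : ℕ) (t : ℂ) (w : Fin (2*r) → ℂ) :
    yMat r i t *ᵥ w = w + t • (fMat r i *ᵥ w) := by
  simp [yMat, Matrix.add_mulVec, Matrix.one_mulVec, Matrix.smul_mulVec]

lemma oprod_zero {N : ℕ} (g : ℕ → Matrix (Fin N) (Fin N) ℂ) : oprod g 0 = 1 := rfl

lemma oprod_succ {N : ℕ} (g : ℕ → Matrix (Fin N) (Fin N) ℂ) (n : ℕ) :
    oprod g (n+1) = oprod g n * g (n+1) := by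
  unfold oprod
  rw [List.range_succ, List.map_append, List.prod_append]
  simp

lemma sbar_mulVec (r i p : ℕ) (hi1 : 1 ≤ i) (hir : i ≤ r) :
    sbar r i *ᵥ vv r p =
      if p + 1 = i ∨ p + i + 1 = 2*r then vv r (p+1)
      else if p = i ∨ p + i = 2*r then -vv r (p-1)
      else vv r p := by
  rw [sbar, ← Matrix.mulVec_mulVec, ← Matrix.mulVec_mulVec]
  by_cases h1 : p + 1 = i ∨ p + i + 1 = 2*r
  · rw [if_pos h1]
    have hE0 : eMat r i *ᵥ vv r p = 0 := by
      rw [eMat_mulVec r i p hi1 hir, if_neg (by omega), if_neg (by omega)]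
    have hF : fMat r i *ᵥ vv r p = vv r (p+1) := by
      rw [fMat_mulVec r i p hi1 hir]
      split_ifs with h h' <;> first | (apply vv_congr; omega) | (exfalso; omega)
    have hE1 : eMat r i *ᵥ vv r (p+1) = vv r p := by
      rw [eMat_mulVec r i (p+1) hi1 hir]
      split_ifs with h h' <;> first | (apply vv_congr; omega) | (exfalso; omega)
    simp only [xMat_mulVec, yMat_mulVec, Matrix.mulVec_add, Matrix.mulVec_smul,
      Matrix.mulVec_zero, hE0, hE1, hF, smul_zero, add_zero, zero_add]
    module
  · rw [if_neg h1]
    by_cases h2 : p = i ∨ p + i = 2*r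
    · rw [if_pos h2]
      have hp1 : 1 ≤ p := by omega
      have hE : eMat r i *ᵥ vv r p = vv r (p-1) := by
        rw [eMat_mulVec r i p hi1 hir]
        split_ifs with h h' <;> first | (apply vv_congr; omega) | (exfalso; omega)
      have hF0 : fMat r i *ᵥ vv r p = 0 := by
        rw [fMat_mulVec r i p hi1 hir, if_neg (by omega), if_neg (by omega)]
      have hF1 : fMat r i *ᵥ vv r (p-1) = vv r p := by
        rw [fMat_mulVec r i (p-1) hi1 hir]
        split_ifs with h h' <;> first | (apply vv_congr; omega) | (exfalso; omega)
      have hE1 : eMat r i *ᵥ vv r (p-1) = 0 := by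
        rw [eMat_mulVec r i (p-1) hi1 hir, if_neg (by omega), if_neg (by omega)]
      simp only [xMat_mulVec, yMat_mulVec, Matrix.mulVec_add, Matrix.mulVec_smul,
        Matrix.mulVec_zero, hE, hE1, hF0, hF1, smul_zero, add_zero, zero_add]
      module
    · rw [if_neg h2]
      have hE0 : eMat r i *ᵥ vv r p = 0 := by
        rw [eMat_mulVec r i p hi1 hir, if_neg (by omega), if_neg (by omega)]
      have hF0 : fMat r i *ᵥ vv r p = 0 := by
        rw [fMat_mulVec r i p hi1 hir, if_neg (by omega), if_neg (by omega)]
      simp only [xMat_mulVec, yMat_mulVec, hE0, hF0, smul_zero, add_zero]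


def Sact (r n p : ℕ) : Fin (2*r) → ℂ :=
  if p + n + 1 = 2*r then vv r (2*r - 1)
  else if p < n then vv r (p+1)
  else if p = n then ((-1 : ℂ))^n • vv r 0
  else if p + n + 2 ≤ 2*r ∨ 2*r ≤ p then vv r p
  else -vv r (p-1)

lemma oprod_sbar_mulVec (r : ℕ) (hr : 1 ≤ r) :
    ∀ n, n ≤ r → ∀ p, oprod (fun l => sbar r l) n *ᵥ vv r p = Sact r n p := by
  intro n
  induction n with
  | zero =>
    intro _ p
    rw [oprod_zero, Matrix.one_mulVec]
    unfold Sact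
    split_ifs <;>
      first
        | rfl
        | (apply vv_congr; omega)
        | (exfalso; omega)
        | (rw [pow_zero, one_smul]; apply vv_congr; omega)
  | succ n ih =>
    intro hn p
    rw [oprod_succ, ← Matrix.mulVec_mulVec, sbar_mulVec r (n+1) p (by omega) (by omega)]
    split_ifs with h1 h2
    · rw [ih (by omega) (p+1)]
      unfold Sact
      split_ifs <;>
        first
          | rfl
          | (apply vv_congr; omega)
          | (exfalso; omega)
    · rw [Matrix.mulVec_neg, ih (by omega) (p-1)]
      unfold Sact
      split_ifs <;>
        first
          | rfl
          | (apply nvv_congr; omega)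
          | (exfalso; omega)
          | (rw [pow_succ, mul_neg_one, neg_smul])
    · rw [ih (by omega) p]
      unfold Sact
      split_ifs <;>
        first
          | rfl
          | (apply vv_congr; omega)
          | (exfalso; omega)


def posC (r c : ℕ) : ℕ := if c < r then c else 3*r - 1 - c

lemma pow_S_mulVec (r : ℕ) (hr : 1 ≤ r) :
    ∀ k c, 1 ≤ c → c + k + 1 ≤ 2*r →
      (oprod (fun l => sbar r l) r)^k *ᵥ vv r (posC r c) =
        (((-1:ℂ))^(c + k - r) * ((-1:ℂ))^(c - r)) • vv r (posC r (c+k)) := by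
  intro k
  induction k with
  | zero =>
    intro c hc hcr
    rw [pow_zero, Matrix.one_mulVec, Nat.add_zero, ← pow_add,
      Even.neg_one_pow ⟨c - r, rfl⟩, one_smul]
  | succ k ih =>
    intro c hc hcr
    have hstep : oprod (fun l => sbar r l) r *ᵥ vv r (posC r c)
        = (if c < r then (1:ℂ) else -1) • vv r (posC r (c+1)) := by
      rw [oprod_sbar_mulVec r hr r le_rfl]
      unfold Sact posC
      split_ifs <;> (try simp only [one_smul, neg_one_smul]) <;>
        first
          | rfl
          | (apply vv_congr; omega)
          | (apply nvv_congr; omega)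
          | (exfalso; omega)
    rw [pow_succ, ← Matrix.mulVec_mulVec, hstep, Matrix.mulVec_smul,
      ih (c+1) (by omega) (by omega), smul_smul]
    have hidx : c + 1 + k = c + (k+1) := by omega
    rw [hidx]
    congr 1
    split_ifs with h
    · have h2 : c + 1 - r = 0 := by omega
      have h3 : c - r = 0 := by omega
      rw [h2, h3]; ring
    · have h2 : c + 1 - r = (c - r) + 1 := by omega
      rw [h2, pow_succ]; ring

lemma U_mulVec (r m' d : ℕ) (hr : 2 ≤ r) (hm'1 : 1 ≤ m') (hm'r : m' ≤ r) (hd1 : 1 ≤ d)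
    (hdr : d ≤ r) (a : ℕ) (ha : a < d) :
    ((oprod (fun l => sbar r l) r)^(m'-1) * oprod (fun l => sbar r l) d) *ᵥ vv r a =
      ((-1:ℂ))^(m'+a-r) • vv r (if a+1+m' ≤ r then m'+a else 3*r-1-m'-a) := by
  rw [← Matrix.mulVec_mulVec, oprod_sbar_mulVec r (by omega) d hdr a]
  have h1 : Sact r d a = vv r (posC r (a+1)) := by
    unfold Sact posC
    split_ifs <;>
      first
        | (apply vv_congr; omega)
        | (exfalso; omega)
  rw [h1, pow_S_mulVec r (by omega) (m'-1) (a+1) (by omega) (by omega)]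
  have e1 : a + 1 + (m'-1) = a + m' := by omega
  have e2 : a + 1 - r = 0 := by omega
  rw [e1, e2, pow_zero, mul_one]
  have e3 : posC r (a+m') = if a+1+m' ≤ r then m'+a else 3*r-1-m'-a := by
    unfold posC; split_ifs <;> omega
  have e4 : a + m' - r = m' + a - r := by omega
  rw [e3, e4]


lemma ofFn_comp_val {α : Type*} (g : ℕ → α) :
    ∀ n, (List.ofFn fun i : Fin n => g (i : ℕ)) = (List.range n).map g := by
  intro n
  induction n with
  | zero => rfl
  | succ n ih =>
    rw [List.ofFn_succ', List.range_succ, List.map_append, List.concat_eq_append, ← ih]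
    simp

lemma iota_swap {r : ℕ} (x y : Fin (2*r) → ℂ) :
    ExteriorAlgebra.ι ℂ x * ExteriorAlgebra.ι ℂ y
      = -(ExteriorAlgebra.ι ℂ y * ExteriorAlgebra.ι ℂ x) :=
  eq_neg_of_add_eq_zero_left (ExteriorAlgebra.ι_add_mul_swap x y)

lemma iota_move {r : ℕ} (x : Fin (2*r) → ℂ) :
    ∀ (L : List (Fin (2*r) → ℂ)),
      ExteriorAlgebra.ι ℂ x * (L.map fun y => ExteriorAlgebra.ι ℂ y).prod
        = ((-1:ℂ))^L.length • ((L.map fun y => ExteriorAlgebra.ι ℂ y).prod * ExteriorAlgebra.ι ℂ x)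
  | [] => by simp
  | a :: L => by
    rw [List.map_cons, List.prod_cons, ← mul_assoc, iota_swap x a, neg_mul, mul_assoc,
      iota_move x L, mul_smul_comm, ← mul_assoc, List.length_cons, pow_succ, mul_neg_one,
      neg_smul]

lemma rev_prod {r : ℕ} : ∀ (b : ℕ) (w : ℕ → Fin (2*r) → ℂ),
    ((List.range b).map fun j => ((-1:ℂ))^j • ExteriorAlgebra.ι ℂ (w j)).prod
      = ((List.range b).map fun j => ExteriorAlgebra.ι ℂ (w (b-1-j))).prod := by
  intro b
  induction b with
  | zero => intro w; rfl
  | succ b ih =>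
    intro w
    have hR : ((List.range (b+1)).map fun j => ExteriorAlgebra.ι ℂ (w (b+1-1-j))).prod
        = ExteriorAlgebra.ι ℂ (w b)
          * ((List.range b).map fun j => ExteriorAlgebra.ι ℂ (w (b-1-j))).prod := by
      rw [List.range_succ_eq_map, List.map_cons, List.prod_cons, List.map_map]
      have hl : List.map ((fun j => ExteriorAlgebra.ι ℂ (w (b+1-1-j))) ∘ Nat.succ) (List.range b)
          = List.map (fun j => ExteriorAlgebra.ι ℂ (w (b-1-j))) (List.range b) :=
        List.map_congr_left fun j hj => congrArg (fun t => ExteriorAlgebra.ι ℂ (w t))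
          (by omega : b + 1 - 1 - Nat.succ j = b - 1 - j)
      rw [hl]
      norm_num
    rw [hR, List.range_succ, List.map_append, List.prod_append, ih w]
    simp only [List.map_cons, List.map_nil, List.prod_cons, List.prod_nil, mul_one]
    have hm := iota_move (w b) ((List.range b).map fun j => w (b-1-j))
    rw [List.map_map, List.length_map, List.length_range] at hm
    have hcomp : ((List.range b).map ((fun y => ExteriorAlgebra.ι ℂ y) ∘ fun j => w (b-1-j)))
        = (List.range b).map fun j => ExteriorAlgebra.ι ℂ (w (b-1-j)) := rfl
    rw [hcomp] at hm
    rw [mul_smul_comm, ← hm]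


def Ecol (r m' : ℕ) (a : ℕ) : Fin (2*r) → ℂ :=
  ((-1:ℂ))^(m'+a-r) • vv r (if a+1+m' ≤ r then m'+a else 3*r-1-m'-a)


/- **Statement 3** (computation (5.5)/(5.6) of the paper): with
`ū = (s̄_1 ⋯ s̄_r)^{m'-1} s̄_1 ⋯ s̄_d`, the induced map on `Λ^d ℂ^{2r}` sends
`v_1 ∧ ⋯ ∧ v_d` to `v_{m'+1} ∧ ⋯ ∧ v_{m'+d}` if `m'+d ≤ r`, and to
`v_{m'+1} ∧ ⋯ ∧ v_r ∧ v_{(d-r+m')‾} ∧ ⋯ ∧ v_{1̄}` if `m'+d > r`; both right-hand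
sides are `⋀_{i} v_{R_i}`, i.e. `⋀_i vv r (rowR r m' d i)`. -/
theorem ubar_on_wedge
    (r m' d : ℕ) (hr : 2 ≤ r) (hm'1 : 1 ≤ m') (hm'r : m' ≤ r) (hd1 : 1 ≤ d) (hdr : d ≤ r) :
    (ExteriorAlgebra.map
        (Matrix.toLin' ((oprod (fun l => sbar r l) r) ^ (m' - 1) * oprod (fun l => sbar r l) d)))
      (ExteriorAlgebra.ιMulti ℂ d (fun i : Fin d => vv r (i : ℕ))) =
    ExteriorAlgebra.ιMulti ℂ d (fun i : Fin d => vv r (rowR r m' d (i : ℕ))) := by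
  rw [ExteriorAlgebra.map_apply_ιMulti]
  have hφ : (Matrix.toLin'
        ((oprod (fun l => sbar r l) r) ^ (m' - 1) * oprod (fun l => sbar r l) d))
      ∘ (fun i : Fin d => vv r (i : ℕ)) = fun i : Fin d => Ecol r m' (i : ℕ) := by
    funext i
    simp only [Function.comp_apply, Matrix.toLin'_apply]
    exact U_mulVec r m' d hr hm'1 hm'r hd1 hdr i i.isLt
  rw [hφ]
  by_cases hcase : m' + d ≤ r
  · have h2 : (fun i : Fin d => Ecol r m' (i : ℕ))
        = fun i : Fin d => vv r (rowR r m' d (i:ℕ)) := by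
      funext i
      have hi := i.isLt
      unfold Ecol rowR
      rw [if_pos (by omega), if_pos (by omega)]
      have h0 : m' + (i:ℕ) - r = 0 := by omega
      rw [h0, pow_zero, one_smul]
    rw [h2]
  · rw [ExteriorAlgebra.ιMulti_apply, ExteriorAlgebra.ιMulti_apply]
    have e1 : (List.ofFn fun i : Fin d => ExteriorAlgebra.ι ℂ (Ecol r m' (i:ℕ)))
        = (List.range d).map fun a => ExteriorAlgebra.ι ℂ (Ecol r m' a) :=
      ofFn_comp_val (fun a => ExteriorAlgebra.ι ℂ (Ecol r m' a)) d
    have e2 : (List.ofFn fun i : Fin d => ExteriorAlgebra.ι ℂ (vv r (rowR r m' d (i:ℕ))))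
        = (List.range d).map fun a => ExteriorAlgebra.ι ℂ (vv r (rowR r m' d a)) :=
      ofFn_comp_val (fun a => ExteriorAlgebra.ι ℂ (vv r (rowR r m' d a))) d
    rw [e1, e2]
    have hd' : d = (r - m') + (d - (r - m')) := by omega
    rw [hd', List.range_add, List.map_append, List.map_append, List.prod_append,
      List.prod_append]
    congr 1
    · congr 1
      apply List.map_congr_left
      intro a ha
      rw [List.mem_range] at ha
      unfold Ecol rowR
      rw [if_pos (by omega), if_pos (by omega)]
      have h0 : m' + a - r = 0 := by omega
      rw [h0, pow_zero, one_smul]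
    · rw [List.map_map, List.map_map]
      have hB1 : List.map ((fun a => ExteriorAlgebra.ι ℂ (Ecol r m' a)) ∘ fun x => (r-m') + x)
            (List.range (d - (r-m')))
          = List.map (fun j => ((-1:ℂ))^j • ExteriorAlgebra.ι ℂ (vv r (2*r-1-j)))
            (List.range (d - (r-m'))) := by
        apply List.map_congr_left
        intro j hj
        rw [List.mem_range] at hj
        simp only [Function.comp_apply]
        unfold Ecol
        rw [if_neg (by omega), (by omega : m' + (r - m' + j) - r = j),
          (by omega : 3*r-1-m'-(r - m' + j) = 2*r-1-j), _root_.map_smul]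
      have hB2 : List.map
            ((fun a => ExteriorAlgebra.ι ℂ (vv r (rowR r m' (r - m' + (d - (r - m'))) a)))
              ∘ fun x => (r-m') + x) (List.range (d - (r-m')))
          = List.map (fun j => ExteriorAlgebra.ι ℂ (vv r (2*r-1-((d - (r-m'))-1-j))))
            (List.range (d - (r-m'))) := by
        apply List.map_congr_left
        intro j hj
        rw [List.mem_range] at hj
        simp only [Function.comp_apply]
        unfold rowR
        rw [if_neg (by omega)]
        exact congrArg (fun t => ExteriorAlgebra.ι ℂ (vv r t)) (by omega)
      rw [hB1, hB2, rev_prod]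

end CTypeMinors
end
end

section
/- Let Y_1,…,Y_r ∈ ℂ^×, set Y_0 := 1, and let X := x_{−1}(Y_1)·x_{−2}(Y_2)⋯x_{−r}(Y_r). Then: X v_i = (Y_{i−1}/Y_i)·v_i + v_{i+1} for 1 ≤ i ≤ r−1; X v_r = (Y_{r−1}/Y_r)·v_r + Σ_{j=1}^{r} (1/Y_{j−1})·v_{j̄}; and X v_{ī} = Σ_{j=1}^{i} (Y_i/Y_{j−1})·v_{j̄} for 1 ≤ i ≤ r. -/
noncomputable section
open Matrix BigOperators

namespace CTypeMinors

lemma oprod_mulVec_fixed {N : ℕ} (g : ℕ → Matrix (Fin N) (Fin N) ℂ) (v : Fin N → ℂ)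
    (n : ℕ) (h : ∀ l, 1 ≤ l → l ≤ n → (g l).mulVec v = v) :
    (oprod g n).mulVec v = v := by
  induction n with
  | zero => rw [oprod_zero, Matrix.one_mulVec]
  | succ n ih =>
    rw [oprod_succ, ← Matrix.mulVec_mulVec, h (n+1) (by omega) le_rfl]
    exact ih fun l h1 h2 => h l h1 (by omega)

lemma oprod_mulVec_fixed_tail {N : ℕ} (g : ℕ → Matrix (Fin N) (Fin N) ℂ) (v : Fin N → ℂ)
    (i n : ℕ) (hin : i ≤ n) (h : ∀ l, i < l → l ≤ n → (g l).mulVec v = v) :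
    (oprod g n).mulVec v = (oprod g i).mulVec v := by
  induction n, hin using Nat.le_induction with
  | base => rfl
  | succ n hn ih =>
    rw [oprod_succ, ← Matrix.mulVec_mulVec, h (n+1) (by omega) le_rfl]
    exact ih fun l h1 h2 => h l h1 (by omega)

lemma al_mulVec (r l : ℕ) (c : ℂ) (a : ℕ) :
    (alMat r l c).mulVec (vv r a) =
      (if a + 1 = l ∨ a + l + 1 = 2*r then c
       else if a = l ∨ a + l = 2*r then c⁻¹ else 1) • vv r a := by
  funext k
  rw [alMat, Matrix.mulVec_diagonal]
  rcases eq_or_ne (k : ℕ) a with h | h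
  · simp [vv, h]
  · simp [vv, h]

lemma f_mulVec (r l : ℕ) (a : ℕ) (ha : a < 2*r) :
    (fMat r l).mulVec (vv r a) =
      (if a + 1 = l ∨ a + l + 1 = 2*r then vv r (a+1) else 0) := by
  funext k
  have key : ∀ j : Fin (2*r), ((j : ℕ) = a) = (j = (⟨a, ha⟩ : Fin (2*r))) := by
    intro j; simp [Fin.ext_iff]
  simp only [Matrix.mulVec, dotProduct, vv, key, mul_ite, mul_one, mul_zero,
    Finset.sum_ite_eq', Finset.mem_univ, if_true, fMat, Matrix.of_apply,
    apply_ite (fun f : Fin (2*r) → ℂ => f k), Pi.zero_apply]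
  have hk := k.isLt
  split_ifs <;> first | rfl | (exfalso; omega)

lemma xm_mulVec (r l : ℕ) (t : ℂ) (ht : t ≠ 0) (a : ℕ) (ha : a < 2*r) :
    (xmMat r l t).mulVec (vv r a) =
      if a + 1 = l ∨ a + l + 1 = 2*r then t⁻¹ • vv r a + vv r (a+1)
      else if a = l ∨ a + l = 2*r then t • vv r a
      else vv r a := by
  rw [xmMat, ← Matrix.mulVec_mulVec, al_mulVec, Matrix.mulVec_smul, yMat,
    Matrix.add_mulVec, Matrix.one_mulVec, Matrix.smul_mulVec, f_mulVec r l a ha]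
  by_cases hc : a + 1 = l ∨ a + l + 1 = 2*r
  · have h2 : ¬ (a = l ∨ a + l = 2*r) := by omega
    simp only [hc, if_true, h2, if_false, smul_add, smul_smul]
    rw [inv_mul_cancel₀ ht, one_smul]
  · simp only [hc, if_false, smul_zero, add_zero, smul_smul]
    split_ifs with h2
    · rw [inv_inv]
    · rw [one_smul]


lemma barred_chain (r : ℕ) (Y : ℕ → ℂ) (hY0 : Y 0 = 1)
    (hYne : ∀ l, 1 ≤ l → l ≤ r → Y l ≠ 0) :
    ∀ n, n + 1 ≤ r →
      (oprod (fun l => xmMat r l (Y l)) n).mulVec (vv r (2*r - (n+1))) =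
        ∑ j ∈ Finset.Icc 1 (n+1), (1 / Y (j - 1)) • vv r (2*r - j) := by
  intro n
  induction n with
  | zero =>
    intro _
    rw [oprod_zero, Matrix.one_mulVec]
    simp [hY0]
  | succ n ih =>
    intro h
    rw [oprod_succ, ← Matrix.mulVec_mulVec,
      xm_mulVec r (n+1) (Y (n+1)) (hYne (n+1) (by omega) (by omega)) (2*r - (n+1+1))
        (by omega),
      if_pos (by omega : 2*r - (n+1+1) + 1 = n+1 ∨ 2*r - (n+1+1) + (n+1) + 1 = 2*r),
      show 2*r - (n+1+1) + 1 = 2*r - (n+1) from by omega,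
      Matrix.mulVec_add, Matrix.mulVec_smul, ih (by omega),
      oprod_mulVec_fixed _ _ n (fun l h1 h2 => by
        rw [xm_mulVec r l (Y l) (hYne l h1 (by omega)) (2*r - (n+1+1)) (by omega),
          if_neg (by omega), if_neg (by omega)]),
      Finset.sum_Icc_succ_top (by omega : 1 ≤ n + 1 + 1), add_comm]
    congr 1
    rw [show n + 1 + 1 - 1 = n + 1 from by omega, one_div]

theorem prod_xm_action_on_basis'
    (r : ℕ) (hr : 2 ≤ r) (Y : ℕ → ℂ) (hY0 : Y 0 = 1)
    (hYne : ∀ l, 1 ≤ l → l ≤ r → Y l ≠ 0) :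
    (∀ i, 1 ≤ i → i < r →
      (oprod (fun l => xmMat r l (Y l)) r).mulVec (vu r i) =
        (Y (i - 1) / Y i) • vu r i + vu r (i + 1)) ∧
    ((oprod (fun l => xmMat r l (Y l)) r).mulVec (vu r r) =
        (Y (r - 1) / Y r) • vu r r + ∑ j ∈ Finset.Icc 1 r, (1 / Y (j - 1)) • vb r j) ∧
    (∀ i, 1 ≤ i → i ≤ r →
      (oprod (fun l => xmMat r l (Y l)) r).mulVec (vb r i) =
        ∑ j ∈ Finset.Icc 1 i, (Y i / Y (j - 1)) • vb r j) := by
  have hscale : ∀ m, m + 1 ≤ r →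
      (oprod (fun l => xmMat r l (Y l)) m).mulVec (vv r m) = Y m • vv r m := by
    intro m hm
    match m with
    | 0 => rw [oprod_zero, Matrix.one_mulVec, hY0, one_smul]
    | Nat.succ k =>
      rw [oprod_succ, ← Matrix.mulVec_mulVec,
        xm_mulVec r (k+1) (Y (k+1)) (hYne (k+1) (by omega) (by omega)) (k+1) (by omega),
        if_neg (by omega), if_pos (Or.inl rfl),
        Matrix.mulVec_smul,
        oprod_mulVec_fixed _ _ k (fun l h1 h2 => by
          rw [xm_mulVec r l (Y l) (hYne l h1 (by omega)) (k+1) (by omega),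
            if_neg (by omega), if_neg (by omega)])]
  refine ⟨?_, ?_, ?_⟩
  · intro i h1 h2
    obtain ⟨k, rfl⟩ : ∃ k, i = k + 1 := ⟨i - 1, by omega⟩
    simp only [vu, Nat.add_sub_cancel]
    rw [oprod_mulVec_fixed_tail _ _ (k+1) r (by omega) (fun l hl1 hl2 => by
        rw [xm_mulVec r l (Y l) (hYne l (by omega) (by omega)) k (by omega),
          if_neg (by omega), if_neg (by omega)]),
      oprod_succ, ← Matrix.mulVec_mulVec,
      xm_mulVec r (k+1) (Y (k+1)) (hYne (k+1) (by omega) (by omega)) k (by omega),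
      if_pos (Or.inl rfl), Matrix.mulVec_add, Matrix.mulVec_smul,
      hscale k (by omega),
      oprod_mulVec_fixed _ _ k (fun l hl1 hl2 => by
        rw [xm_mulVec r l (Y l) (hYne l hl1 (by omega)) (k+1) (by omega),
          if_neg (by omega), if_neg (by omega)])]
    congr 1
    rw [smul_smul, inv_mul_eq_div]
  · obtain ⟨k, rfl⟩ : ∃ k, r = k + 1 := ⟨r - 1, by omega⟩
    simp only [vu, vb, Nat.add_sub_cancel]
    have hb := barred_chain (k+1) Y hY0 hYne k (by omega)
    rw [show 2*(k+1) - (k+1) = k + 1 from by omega] at hb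
    rw [oprod_succ, ← Matrix.mulVec_mulVec,
      xm_mulVec (k+1) (k+1) (Y (k+1)) (hYne (k+1) (by omega) (by omega)) k (by omega),
      if_pos (Or.inl rfl), Matrix.mulVec_add, Matrix.mulVec_smul,
      hscale k (by omega), hb]
    congr 1
    rw [smul_smul, inv_mul_eq_div]
  · intro i h1 h2
    obtain ⟨k, rfl⟩ : ∃ k, i = k + 1 := ⟨i - 1, by omega⟩
    simp only [vb]
    have hb := barred_chain r Y hY0 hYne k (by omega)
    rw [oprod_mulVec_fixed_tail _ _ (k+1) r (by omega) (fun l hl1 hl2 => by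
        rw [xm_mulVec r l (Y l) (hYne l (by omega) (by omega)) (2*r - (k+1)) (by omega),
          if_neg (by omega), if_neg (by omega)]),
      oprod_succ, ← Matrix.mulVec_mulVec,
      xm_mulVec r (k+1) (Y (k+1)) (hYne (k+1) (by omega) (by omega)) (2*r - (k+1))
        (by omega),
      if_neg (by omega), if_pos (by omega : 2*r - (k+1) = k+1 ∨ 2*r - (k+1) + (k+1) = 2*r),
      Matrix.mulVec_smul, hb, Finset.smul_sum]
    refine Finset.sum_congr rfl fun j _ => ?_
    rw [smul_smul, mul_one_div]

/- **Statement 6** (formulas (6.9), (6.10) of the paper): the action of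
`X = x_{-1}(Y_1) ⋯ x_{-r}(Y_r)` on the basis vectors, with `Y_0 = 1`. -/
theorem prod_xm_action_on_basis
    (r : ℕ) (hr : 2 ≤ r) (Y : ℕ → ℂ) (hY0 : Y 0 = 1)
    (hYne : ∀ l, 1 ≤ l → l ≤ r → Y l ≠ 0) :
    (∀ i, 1 ≤ i → i < r →
      (oprod (fun l => xmMat r l (Y l)) r).mulVec (vu r i) =
        (Y (i - 1) / Y i) • vu r i + vu r (i + 1)) ∧
    ((oprod (fun l => xmMat r l (Y l)) r).mulVec (vu r r) =
        (Y (r - 1) / Y r) • vu r r + ∑ j ∈ Finset.Icc 1 r, (1 / Y (j - 1)) • vb r j) ∧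
    (∀ i, 1 ≤ i → i ≤ r →
      (oprod (fun l => xmMat r l (Y l)) r).mulVec (vb r i) =
        ∑ j ∈ Finset.Icc 1 i, (Y i / Y (j - 1)) • vb r j) :=
  prod_xm_action_on_basis' r hr Y hY0 hYne

end CTypeMinors
end
end

section
/- Let 1 ≤ δ ≤ d and let i_1 < i_2 < ⋯ < i_δ be unbarred elements of J with i_δ = r, and let i_{δ+1},…,i_d be barred elements of J. Then in Λ^d ℂ^{2r}: Λ^d(X)(v_{i_1} ∧ ⋯ ∧ v_{i_d}) = Σ_{(j_1,…,j_d) ∈ V} ( ∏_{ζ=1}^{δ−1} Y_{j_ζ − 1}/Y_{i_ζ} )·Y(j_δ)·( ∏_{ζ=δ+1}^{d} Y_{|i_ζ|}/Y_{|j_ζ| − 1} )·v_{j_1} ∧ ⋯ ∧ v_{j_d}, where Y(j_δ) := Y_{r−1}/Y_r if j_δ = r and Y(j_δ) := 1/Y_{|j_δ| − 1} if j_δ is barred, and V is the set of tuples (j_1,…,j_d) in J with j_ζ ∈ {i_ζ, i_ζ + 1} for 1 ≤ ζ ≤ δ−1, j_1 < ⋯ < j_δ, j_δ ∈ {r, r̄,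 (r−1)‾, …, 1̄}, and j_ζ barred with |j_ζ| ≤ |i_ζ| for δ+1 ≤ ζ ≤ d. -/
noncomputable section
open Matrix BigOperators

namespace CTypeMinors

/-- diagonal value of `α_i^∨(t⁻¹)` at (0-indexed) position `a`. -/
def dval (r i : ℕ) (t : ℂ) (a : ℕ) : ℂ :=
  if a + 1 = i ∨ a + i + 1 = 2*r then t⁻¹
  else if a = i ∨ a + i = 2*r then t
  else 1

lemma xm_entry (r i : ℕ) (t : ℂ) (c a : Fin (2*r)) :
    xmMat r i t c a =
      (if (c:ℕ) = (a:ℕ) then dval r i t a else 0) +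
      (if (c:ℕ) = (a:ℕ)+1 then
        (if (a:ℕ)+1 = i ∨ (a:ℕ)+i+1 = 2*r then t * dval r i t a else 0) else 0) := by
  unfold xmMat yMat alMat dval fMat
  rw [Matrix.mul_diagonal]
  simp only [Matrix.add_apply, Matrix.one_apply, Matrix.smul_apply, Matrix.of_apply,
    smul_eq_mul, inv_inv, Fin.ext_iff]
  split_ifs <;> first | ring1 | omega | (exfalso; omega)



def Mform (r n : ℕ) (Y : ℕ → ℂ) : Matrix (Fin (2*r)) (Fin (2*r)) ℂ :=
  Matrix.of fun b a =>
    if (a:ℕ) < 2*r - n - 1 then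
      (if (a:ℕ) < n then
        (if (b:ℕ) = (a:ℕ) then Y a / Y ((a:ℕ)+1) else if (b:ℕ) = (a:ℕ)+1 then 1 else 0)
       else if (a:ℕ) = n then (if (b:ℕ) = (a:ℕ) then Y n else 0)
       else (if (b:ℕ) = (a:ℕ) then 1 else 0))
    else if (a:ℕ) = 2*r - n - 1 then
      (if (b:ℕ) = (a:ℕ) ∧ (a:ℕ) < n then Y a / Y ((a:ℕ)+1)
       else if (a:ℕ) ≤ (b:ℕ) then 1 / Y (2*r - 1 - (b:ℕ)) else 0)
    else (if (a:ℕ) ≤ (b:ℕ) then Y (2*r - (a:ℕ)) / Y (2*r - 1 - (b:ℕ)) else 0)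

lemma sum_pick {r : ℕ} (B : Matrix (Fin (2*r)) (Fin (2*r)) ℂ) (b : Fin (2*r)) (m : ℕ) (x : ℂ) :
    (∑ c : Fin (2*r), B b c * (if (c:ℕ) = m then x else 0)) =
      if h : m < 2*r then B b ⟨m, h⟩ * x else 0 := by
  split_ifs with h
  · rw [Finset.sum_eq_single (⟨m, h⟩ : Fin (2*r))]
    · simp
    · intro c _ hc
      rw [if_neg, mul_zero]
      intro hcm
      exact hc (Fin.ext hcm)
    · simp
  · apply Finset.sum_eq_zero
    intro c _
    rw [if_neg, mul_zero]
    have := c.isLt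
    omega

lemma mul_xm {r : ℕ} (i : ℕ) (hi1 : 1 ≤ i) (hir : i ≤ r) (t : ℂ) (ht : t ≠ 0)
    (B : Matrix (Fin (2*r)) (Fin (2*r)) ℂ) (b a : Fin (2*r)) :
    (B * xmMat r i t) b a =
      B b a * dval r i t a +
      (if h : (a:ℕ)+1 = i ∨ (a:ℕ)+i+1 = 2*r then B b ⟨(a:ℕ)+1, by omega⟩ else 0) := by
  rw [Matrix.mul_apply]
  have key : ∀ c : Fin (2*r), B b c * xmMat r i t c a =
      B b c * (if (c:ℕ) = (a:ℕ) then dval r i t a else 0) +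
      B b c * (if (c:ℕ) = (a:ℕ)+1 then
        (if (a:ℕ)+1 = i ∨ (a:ℕ)+i+1 = 2*r then t * dval r i t a else 0) else 0) := by
    intro c
    rw [xm_entry, mul_add]
  simp only [key]
  rw [Finset.sum_add_distrib, sum_pick, sum_pick, dif_pos a.isLt]
  simp only [Fin.eta]
  congr 1
  by_cases htr : (a:ℕ)+1 = i ∨ (a:ℕ)+i+1 = 2*r
  · rw [dif_pos (show (a:ℕ)+1 < 2*r by omega), dif_pos htr, if_pos htr]
    have hd : dval r i t a = t⁻¹ := by rw [dval, if_pos htr]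
    rw [hd, mul_inv_cancel₀ ht, mul_one]
  · rw [dif_neg htr]
    by_cases h2 : (a:ℕ)+1 < 2*r
    · rw [dif_pos h2, if_neg htr, mul_zero]
    · rw [dif_neg h2]

lemma Mform_zero (r : ℕ) (Y : ℕ → ℂ) (hY0 : Y 0 = 1) : Mform r 0 Y = 1 := by
  ext b a
  have hb := b.isLt
  have ha := a.isLt
  simp only [Mform, Matrix.of_apply, Matrix.one_apply, Fin.ext_iff]
  split_ifs <;>
    first
      | ring1
      | (exfalso; omega)
      | (rw [hY0]; try ring1)
      | (rw [show 2*r - 1 - (b:ℕ) = 0 by omega, hY0]; try ring1)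


lemma Mform_lt {r n : ℕ} {Y : ℕ → ℂ} (b a : Fin (2*r))
    (h1 : (a:ℕ) < 2*r - n - 1) (h2 : (a:ℕ) < n) :
    Mform r n Y b a =
      if (b:ℕ) = (a:ℕ) then Y a / Y ((a:ℕ)+1) else if (b:ℕ) = (a:ℕ)+1 then 1 else 0 := by
  simp only [Mform, Matrix.of_apply]
  rw [if_pos h1, if_pos h2]

lemma Mform_diag {r n : ℕ} {Y : ℕ → ℂ} (b a : Fin (2*r))
    (h1 : (a:ℕ) < 2*r - n - 1) (h2 : ¬ (a:ℕ) < n) (h3 : (a:ℕ) = n) :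
    Mform r n Y b a = if (b:ℕ) = (a:ℕ) then Y n else 0 := by
  simp only [Mform, Matrix.of_apply]
  rw [if_pos h1, if_neg h2, if_pos h3]

lemma Mform_id {r n : ℕ} {Y : ℕ → ℂ} (b a : Fin (2*r))
    (h1 : (a:ℕ) < 2*r - n - 1) (h2 : ¬ (a:ℕ) < n) (h3 : ¬ (a:ℕ) = n) :
    Mform r n Y b a = if (b:ℕ) = (a:ℕ) then 1 else 0 := by
  simp only [Mform, Matrix.of_apply]
  rw [if_pos h1, if_neg h2, if_neg h3]

lemma Mform_mid {r n : ℕ} {Y : ℕ → ℂ} (b a : Fin (2*r))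
    (h1 : ¬ (a:ℕ) < 2*r - n - 1) (h2 : (a:ℕ) = 2*r - n - 1) :
    Mform r n Y b a =
      if (b:ℕ) = (a:ℕ) ∧ (a:ℕ) < n then Y a / Y ((a:ℕ)+1)
      else if (a:ℕ) ≤ (b:ℕ) then 1 / Y (2*r - 1 - (b:ℕ)) else 0 := by
  simp only [Mform, Matrix.of_apply]
  rw [if_neg h1, if_pos h2]

lemma Mform_bar {r n : ℕ} {Y : ℕ → ℂ} (b a : Fin (2*r))
    (h1 : ¬ (a:ℕ) < 2*r - n - 1) (h2 : ¬ (a:ℕ) = 2*r - n - 1) :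
    Mform r n Y b a =
      if (a:ℕ) ≤ (b:ℕ) then Y (2*r - (a:ℕ)) / Y (2*r - 1 - (b:ℕ)) else 0 := by
  simp only [Mform, Matrix.of_apply]
  rw [if_neg h1, if_neg h2]

lemma Mform_step (r : ℕ) (Y : ℕ → ℂ) (n : ℕ) (hn : n + 1 ≤ r) (hYn : Y (n+1) ≠ 0) :
    Mform r n Y * xmMat r (n+1) (Y (n+1)) = Mform r (n+1) Y := by
  ext b a
  rw [mul_xm (n+1) (by omega) hn _ hYn]
  have hb := b.isLt
  have ha := a.isLt
  rcases lt_trichotomy ((a:ℕ)) n with h1 | h1 | h1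
  · -- a < n
    have hd : dval r (n+1) (Y (n+1)) ↑a = 1 := by
      simp only [dval]
      rw [if_neg (by omega), if_neg (by omega)]
    rw [dif_neg (by omega), hd, mul_one, add_zero,
      Mform_lt b a (by omega) (by omega), Mform_lt b a (by omega) (by omega)]
  · -- a = n
    have hd : dval r (n+1) (Y (n+1)) ↑a = (Y (n+1))⁻¹ := by
      simp only [dval]
      rw [if_pos (by omega)]
    rw [dif_pos (by omega), hd, Mform_diag b a (by omega) (by omega) h1]
    rcases lt_or_eq_of_le hn with hr2 | hr2
    · -- n+1 < r
      rw [Mform_id b _ (by simp only [Fin.val_mk]; omega)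
            (by simp only [Fin.val_mk]; omega) (by simp only [Fin.val_mk]; omega),
          Mform_lt b a (by omega) (by omega)]
      simp only [Fin.val_mk, h1]
      split_ifs <;> first | ring1 | (exfalso; omega)
    · -- n+1 = r
      rw [Mform_mid b _ (by simp only [Fin.val_mk]; omega) (by simp only [Fin.val_mk]; omega),
          Mform_mid b a (by omega) (by omega)]
      simp only [Fin.val_mk, h1]
      split_ifs <;> first | ring1 | (exfalso; omega)
  · -- n < a
    rcases lt_trichotomy ((a:ℕ)) (2*r-n-2) with h2 | h2 | h2
    · -- n < a < 2r-n-2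
      have hd0 : ¬ ((a:ℕ)+1 = n+1 ∨ (a:ℕ)+(n+1)+1 = 2*r) := by omega
      rw [dif_neg hd0]
      rcases eq_or_lt_of_le (show n+1 ≤ (a:ℕ) by omega) with h3 | h3
      · -- a = n+1
        have hd : dval r (n+1) (Y (n+1)) ↑a = Y (n+1) := by
          simp only [dval]
          rw [if_neg hd0, if_pos (by omega)]
        rw [hd, add_zero, Mform_id b a (by omega) (by omega) (by omega),
          Mform_diag b a (by omega) (by omega) (by omega)]
        simp only [← h3]
        split_ifs <;> first | ring1 | (exfalso; omega)
      · -- n+1 < a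
        have hd : dval r (n+1) (Y (n+1)) ↑a = 1 := by
          simp only [dval]
          rw [if_neg hd0, if_neg (by omega)]
        rw [hd, mul_one, add_zero, Mform_id b a (by omega) (by omega) (by omega),
          Mform_id b a (by omega) (by omega) (by omega)]
    · -- a = 2r-n-2 (then n+2 ≤ r)
      have hd : dval r (n+1) (Y (n+1)) ↑a = (Y (n+1))⁻¹ := by
        simp only [dval]
        rw [if_pos (by omega)]
      rw [dif_pos (by omega), hd, Mform_id b a (by omega) (by omega) (by omega),
        Mform_mid b _ (by simp only [Fin.val_mk]; omega) (by simp only [Fin.val_mk]; omega),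
        Mform_mid b a (by omega) (by omega)]
      simp only [Fin.val_mk, h2]
      split_ifs <;>
        first
          | ring1
          | (exfalso; omega)
          | (rw [show 2*r - 1 - (b:ℕ) = n+1 by omega]; ring1)
    · -- a > 2r-n-2
      have hd0 : ¬ ((a:ℕ)+1 = n+1 ∨ (a:ℕ)+(n+1)+1 = 2*r) := by omega
      rw [dif_neg hd0]
      rcases eq_or_lt_of_le (show 2*r-n-1 ≤ (a:ℕ) by omega) with h3 | h3
      · -- a = 2r-n-1
        have hd : dval r (n+1) (Y (n+1)) ↑a = Y (n+1) := by
          simp only [dval]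
          rw [if_neg hd0, if_pos (by omega)]
        rw [hd, add_zero, Mform_mid b a (by omega) (by omega),
          Mform_bar b a (by omega) (by omega)]
        rw [show 2*r - (a:ℕ) = n+1 by omega]
        split_ifs <;> first | ring1 | (exfalso; omega)
      · -- a > 2r-n-1
        have hd : dval r (n+1) (Y (n+1)) ↑a = 1 := by
          simp only [dval]
          rw [if_neg hd0, if_neg (by omega)]
        rw [hd, mul_one, add_zero, Mform_bar b a (by omega) (by omega),
          Mform_bar b a (by omega) (by omega)]

lemma oprod_eq (r : ℕ) (Y : ℕ → ℂ) (hY0 : Y 0 = 1)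
    (hYne : ∀ l, 1 ≤ l → l ≤ r → Y l ≠ 0) :
    ∀ n, n ≤ r → oprod (fun l => xmMat r l (Y l)) n = Mform r n Y := by
  intro n
  induction n with
  | zero =>
    intro _
    rw [Mform_zero r Y hY0]
    rfl
  | succ k ih =>
    intro hk
    rw [oprod_succ, ih (by omega),
      Mform_step r Y k hk (hYne (k+1) (by omega) hk)]

lemma mulVec_vv_s8 {r : ℕ} (M : Matrix (Fin (2*r)) (Fin (2*r)) ℂ) (m : ℕ) (hm : m < 2*r) :
    M.mulVec (vv r m) = ∑ b : Fin (2*r), (M b ⟨m, hm⟩) • vv r (b:ℕ) := by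
  funext k
  simp only [Matrix.mulVec, dotProduct, vv, Finset.sum_apply, Pi.smul_apply, smul_eq_mul]
  rw [Finset.sum_eq_single (⟨m, hm⟩ : Fin (2*r))
      (fun c _ hc => by rw [if_neg (fun hcm => hc (Fin.ext hcm)), mul_zero])
      (by simp),
    Finset.sum_eq_single k
      (fun c _ hc => by rw [if_neg (fun hcm => hc (Fin.ext hcm.symm)), mul_zero])
      (by simp)]
  simp


open Classical in
theorem lambda_on_wedge_expansion_top
    (r : ℕ) (hr : 2 ≤ r) (Y : ℕ → ℂ) (hY0 : Y 0 = 1)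
    (hYne : ∀ l, 1 ≤ l → l ≤ r → Y l ≠ 0)
    (d : ℕ) (hd1 : 1 ≤ d) (δ : ℕ) (hδ1 : 1 ≤ δ) (hδ : δ ≤ d) (I : Fin d → ℕ)
    (hIu : ∀ ζ : Fin d, (ζ : ℕ) < δ → I ζ < r)
    (hItop : ∀ ζ : Fin d, (ζ : ℕ) + 1 = δ → I ζ = r - 1)
    (hIinc : ∀ ζ η : Fin d, (η : ℕ) < δ → ζ < η → I ζ < I η)
    (hIb : ∀ ζ : Fin d, δ ≤ (ζ : ℕ) → r ≤ I ζ ∧ I ζ < 2*r) :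
    (ExteriorAlgebra.map (Matrix.toLin' (oprod (fun l => xmMat r l (Y l)) r)))
      (ExteriorAlgebra.ιMulti ℂ d (fun ζ : Fin d => vv r (I ζ))) =
    ∑ Jf : Fin d → Fin (2*r),
      if ((∀ ζ : Fin d, (ζ : ℕ) + 1 < δ → ((Jf ζ : ℕ) = I ζ ∨ (Jf ζ : ℕ) = I ζ + 1)) ∧
          (∀ ζ η : Fin d, (η : ℕ) < δ → ζ < η → Jf ζ < Jf η) ∧
          (∀ ζ : Fin d, (ζ : ℕ) + 1 = δ → r - 1 ≤ (Jf ζ : ℕ)) ∧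
          (∀ ζ : Fin d, δ ≤ (ζ : ℕ) → r ≤ (Jf ζ : ℕ) ∧ 2*r - (Jf ζ : ℕ) ≤ 2*r - I ζ))
      then (∏ ζ : Fin d,
              if (ζ : ℕ) + 1 < δ then Y (Jf ζ : ℕ) / Y (I ζ + 1)
              else if (ζ : ℕ) + 1 = δ then
                (if (Jf ζ : ℕ) = r - 1 then Y (r - 1) / Y r
                 else 1 / Y (2*r - (Jf ζ : ℕ) - 1))
              else Y (2*r - I ζ) / Y (2*r - (Jf ζ : ℕ) - 1)) •
            ExteriorAlgebra.ιMulti ℂ d (fun ζ : Fin d => vv r (Jf ζ : ℕ))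
      else 0 := by
  have hδd : δ - 1 < d := by omega
  have hI2r : ∀ ζ : Fin d, I ζ < 2*r := by
    intro ζ
    rcases lt_or_ge ((ζ:ℕ)) δ with h | h
    · have := hIu ζ h; omega
    · exact (hIb ζ h).2
  have hIlt : ∀ ζ : Fin d, (ζ:ℕ)+1 < δ → I ζ < r - 1 := by
    intro ζ h
    have hIδ : I ⟨δ-1, hδd⟩ = r - 1 := hItop ⟨δ-1, hδd⟩ (by simp only [Fin.val_mk]; omega)
    have h2 := hIinc ζ ⟨δ-1, hδd⟩ (by simp only [Fin.val_mk]; omega)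
      (by rw [Fin.lt_def]; simp only [Fin.val_mk]; omega)
    omega
  rw [oprod_eq r Y hY0 hYne r le_rfl, ExteriorAlgebra.map_apply_ιMulti]
  set M := Mform r r Y with hMdef
  have hcols : ((Matrix.toLin' M) ∘ fun ζ : Fin d => vv r (I ζ)) =
      fun ζ : Fin d => ∑ b : Fin (2*r), (M b ⟨I ζ, hI2r ζ⟩) • vv r (b:ℕ) := by
    funext ζ
    simp only [Function.comp_apply, Matrix.toLin'_apply]
    exact mulVec_vv_s8 M (I ζ) (hI2r ζ)
  rw [hcols]
  have expand := MultilinearMap.map_sum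
    (ExteriorAlgebra.ιMulti ℂ d (M := Fin (2*r) → ℂ)).toMultilinearMap
    (g := fun (ζ : Fin d) (b : Fin (2*r)) => (M b ⟨I ζ, hI2r ζ⟩) • vv r (b:ℕ))
  simp only [AlternatingMap.coe_multilinearMap] at expand
  rw [expand]
  refine Finset.sum_congr rfl fun Jf _ => ?_
  have hsmul := MultilinearMap.map_smul_univ
    (ExteriorAlgebra.ιMulti ℂ d (M := Fin (2*r) → ℂ)).toMultilinearMap
    (fun ζ => M (Jf ζ) ⟨I ζ, hI2r ζ⟩) (fun ζ => vv r ((Jf ζ : Fin (2*r)):ℕ))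
  simp only [AlternatingMap.coe_multilinearMap] at hsmul
  rw [hsmul]
  by_cases hc :
      ((∀ ζ : Fin d, (ζ : ℕ) + 1 < δ → ((Jf ζ : ℕ) = I ζ ∨ (Jf ζ : ℕ) = I ζ + 1)) ∧
       (∀ ζ η : Fin d, (η : ℕ) < δ → ζ < η → Jf ζ < Jf η) ∧
       (∀ ζ : Fin d, (ζ : ℕ) + 1 = δ → r - 1 ≤ (Jf ζ : ℕ)) ∧
       (∀ ζ : Fin d, δ ≤ (ζ : ℕ) → r ≤ (Jf ζ : ℕ) ∧ 2*r - (Jf ζ : ℕ) ≤ 2*r - I ζ))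
  · rw [if_pos hc]
    obtain ⟨hc1, hc2, hc3, hc4⟩ := hc
    congr 1
    refine Finset.prod_congr rfl fun ζ _ => ?_
    rcases lt_trichotomy ((ζ:ℕ)+1) δ with hζ | hζ | hζ
    · have hI : I ζ < r - 1 := hIlt ζ hζ
      rw [hMdef, Mform_lt (Jf ζ) ⟨I ζ, hI2r ζ⟩ (by simp only [Fin.val_mk]; omega)
        (by simp only [Fin.val_mk]; omega)]
      simp only [Fin.val_mk]
      rw [if_pos hζ]
      rcases hc1 ζ hζ with h | h
      · rw [if_pos h, h]
      · rw [if_neg (show ¬ ((Jf ζ : ℕ) = I ζ) by omega), if_pos h, h,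
          div_self (hYne (I ζ + 1) (by omega) (by omega))]
    · have hI : I ζ = r - 1 := hItop ζ hζ
      have h3 := hc3 ζ hζ
      rw [hMdef, Mform_mid (Jf ζ) ⟨I ζ, hI2r ζ⟩ (by simp only [Fin.val_mk]; omega)
        (by simp only [Fin.val_mk]; omega)]
      simp only [Fin.val_mk]
      rw [if_neg (show ¬ ((ζ:ℕ) + 1 < δ) by omega), if_pos hζ]
      by_cases hJ : (Jf ζ : ℕ) = r - 1
      · rw [if_pos (show (Jf ζ : ℕ) = I ζ ∧ I ζ < r from ⟨by omega, by omega⟩),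
          if_pos hJ, hI, show r - 1 + 1 = r by omega]
      · rw [if_neg (show ¬ ((Jf ζ : ℕ) = I ζ ∧ I ζ < r) by omega),
          if_pos (show I ζ ≤ (Jf ζ : ℕ) by omega), if_neg hJ,
          show 2*r - 1 - ((Jf ζ):ℕ) = 2*r - ((Jf ζ):ℕ) - 1 by omega]
    · have hI := hIb ζ (by omega)
      have h4 := hc4 ζ (by omega)
      rw [hMdef, Mform_bar (Jf ζ) ⟨I ζ, hI2r ζ⟩ (by simp only [Fin.val_mk]; omega)
        (by simp only [Fin.val_mk]; omega)]
      simp only [Fin.val_mk]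
      rw [if_neg (show ¬ ((ζ:ℕ) + 1 < δ) by omega),
        if_neg (show ¬ ((ζ:ℕ) + 1 = δ) by omega),
        if_pos (show I ζ ≤ (Jf ζ : ℕ) by omega),
        show 2*r - 1 - ((Jf ζ):ℕ) = 2*r - ((Jf ζ):ℕ) - 1 by omega]
  · rw [if_neg hc]
    by_cases hnz : ∀ ζ : Fin d, M (Jf ζ) ⟨I ζ, hI2r ζ⟩ ≠ 0
    · have cl1 : ∀ ζ : Fin d, (ζ:ℕ)+1 < δ → ((Jf ζ:ℕ) = I ζ ∨ (Jf ζ:ℕ) = I ζ + 1) := by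
        intro ζ hζ
        have hI : I ζ < r - 1 := hIlt ζ hζ
        by_contra hcon
        push_neg at hcon
        apply hnz ζ
        rw [hMdef, Mform_lt (Jf ζ) ⟨I ζ, hI2r ζ⟩ (by simp only [Fin.val_mk]; omega)
          (by simp only [Fin.val_mk]; omega)]
        simp only [Fin.val_mk]
        rw [if_neg hcon.1, if_neg hcon.2]
      have cl3 : ∀ ζ : Fin d, (ζ:ℕ)+1 = δ → r - 1 ≤ (Jf ζ:ℕ) := by
        intro ζ hζ
        have hI : I ζ = r - 1 := hItop ζ hζ
        by_contra hcon
        push_neg at hcon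
        apply hnz ζ
        rw [hMdef, Mform_mid (Jf ζ) ⟨I ζ, hI2r ζ⟩ (by simp only [Fin.val_mk]; omega)
          (by simp only [Fin.val_mk]; omega)]
        simp only [Fin.val_mk]
        rw [if_neg (show ¬ ((Jf ζ : ℕ) = I ζ ∧ I ζ < r) by omega),
          if_neg (show ¬ (I ζ ≤ (Jf ζ : ℕ)) by omega)]
      have cl4 : ∀ ζ : Fin d, δ ≤ (ζ:ℕ) → r ≤ (Jf ζ:ℕ) ∧ 2*r - (Jf ζ:ℕ) ≤ 2*r - I ζ := by
        intro ζ hζ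
        have hI := hIb ζ hζ
        have hle : I ζ ≤ (Jf ζ:ℕ) := by
          by_contra hcon
          apply hnz ζ
          rw [hMdef, Mform_bar (Jf ζ) ⟨I ζ, hI2r ζ⟩ (by simp only [Fin.val_mk]; omega)
            (by simp only [Fin.val_mk]; omega)]
          simp only [Fin.val_mk]
          rw [if_neg (show ¬ (I ζ ≤ (Jf ζ : ℕ)) by omega)]
        omega
      have hcl2 : ¬ (∀ ζ η : Fin d, (η : ℕ) < δ → ζ < η → Jf ζ < Jf η) :=
        fun h2 => hc ⟨cl1, h2, cl3, cl4⟩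
      push_neg at hcl2
      obtain ⟨ζ, η, hη, hζη, hge⟩ := hcl2
      have hζη' : (ζ:ℕ) < (η:ℕ) := hζη
      have h1 : (ζ:ℕ)+1 < δ := by omega
      have hJζ := cl1 ζ h1
      have hIζη := hIinc ζ η hη hζη
      have hIη : I η ≤ (Jf η:ℕ) := by
        rcases lt_or_eq_of_le (show (η:ℕ)+1 ≤ δ by omega) with h | h
        · rcases cl1 η h with h' | h' <;> omega
        · have := cl3 η h
          have := hItop η h
          omega
      have hge' : (Jf η:ℕ) ≤ (Jf ζ:ℕ) := hge
      have heq : Jf ζ = Jf η := Fin.ext (by omega)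
      rw [(ExteriorAlgebra.ιMulti ℂ d).map_eq_zero_of_eq
        (fun ζ' => vv r ((Jf ζ' : Fin (2*r)):ℕ)) (i := ζ) (j := η)
        (congrArg (fun p : Fin (2*r) => vv r (p:ℕ)) heq) (ne_of_lt hζη), smul_zero]
    · push_neg at hnz
      obtain ⟨ζ0, h0⟩ := hnz
      rw [Finset.prod_eq_zero (Finset.mem_univ ζ0) h0, zero_smul]

end CTypeMinors
end
end

section
/- Assume m′+d > r. For every path p = (a^{(s)}_i) ∈ X_d(m,m′), every 1 ≤ i ≤ d−1 and every 1 ≤ s ≤ m: if a^{(s)}_i is barred, then a^{(s−1)}_{i+1} is barred and a^{(s)}_i < a^{(s−1)}_{i+1} in the order of J. -/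
noncomputable section
open Matrix BigOperators

namespace CTypeMinors

/-- `A` encodes a path `p ∈ X_d(m,m')` (Definition 6.2): `A s i` (for `0 ≤ s ≤ m`,
`1 ≤ i ≤ d`) is the 0-indexed natural encoding of `a^{(s)}_i ∈ J` (unbarred
`j ↦ j - 1`, barred `j̄ ↦ 2r - j`; the order of `J` is the natural order, and an
element is barred iff its encoding is `≥ r`).  The five clauses are conditions
(i)+(ii), (iii), (iv) (twice) and (v) of Definition 6.2. -/
def IsPath (r m m' d : ℕ) (A : ℕ → ℕ → ℕ) : Prop :=
  (∀ s, s ≤ m → ∀ i, 1 ≤ i → i ≤ d → A s i < 2*r) ∧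
  (∀ s, s ≤ m → ∀ i, 1 ≤ i → i < d → A s i < A s (i+1)) ∧
  (∀ s, s < m → ∀ i, 1 ≤ i → i ≤ d →
      (A s i + 1 < r → (A (s+1) i = A s i ∨ A (s+1) i = A s i + 1)) ∧
      A s i ≤ A (s+1) i) ∧
  (∀ i, 1 ≤ i → i ≤ d → A 0 i = i - 1 ∧ A m i = rowR r m' d (i - 1)) ∧
  (∀ s, s < m → ∀ i, 1 ≤ i → i < d → r ≤ A (s+1) i →
      absV r (A s (i+1)) < absV r (A (s+1) i))

/-- The set `{l^{(1)}_i, …, l^{(m-m')}_i}` attached to (the `i`-th sequence of) a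
path, as in (6.11), (6.12). -/
def lSet (r m m' : ℕ) (A : ℕ → ℕ → ℕ) (i : ℕ) : Finset ℕ :=
  if i + m' ≤ r then (Finset.range m).filter (fun s => A s i = A (s+1) i)
  else (Finset.range (m + r + 1 - (i + m'))).filter
         (fun s => (A s i < r ∧ A s i = A (s+1) i) ∨ r ≤ A s i)

/-- `l^{(s)}_i` (for `1 ≤ s ≤ m-m'`): the `s`-th smallest element of `lSet`. -/
def lv (r m m' : ℕ) (A : ℕ → ℕ → ℕ) (i s : ℕ) : ℕ :=
  ((lSet r m m' A i).sort (· ≤ ·)).getD (s - 1) 0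

/-- `k^{(s)}_i := a^{(l^{(s)}_i)}_i`. -/
def kv (r m m' : ℕ) (A : ℕ → ℕ → ℕ) (i s : ℕ) : ℕ := A (lv r m m' A i s) i

/-- `δ_i`: the number of `s ∈ {1, …, m-m'}` with `k^{(s)}_i` unbarred. -/
def dv (r m m' : ℕ) (A : ℕ → ℕ → ℕ) (i : ℕ) : ℕ :=
  ((Finset.Icc 1 (m - m')).filter (fun s => kv r m m' A i s < r)).card

/- **Statement 10** (Lemma 6.12): if `a^{(s)}_i` is barred then `a^{(s-1)}_{i+1}` is
barred and `a^{(s)}_i < a^{(s-1)}_{i+1}` in the order of `J` (i.e. the natural order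
of the encodings). -/
theorem path_barred_step
    (r m m' d : ℕ) (hr : 2 ≤ r) (hm'1 : 1 ≤ m') (hm'm : m' ≤ m) (hmr : m ≤ r)
    (hd1 : 1 ≤ d) (hdr : d ≤ r) (hbig : r < m' + d)
    (A : ℕ → ℕ → ℕ) (hA : IsPath r m m' d A) :
    ∀ i, 1 ≤ i → i < d → ∀ s, 1 ≤ s → s ≤ m → r ≤ A s i →
      r ≤ A (s - 1) (i + 1) ∧ A s i < A (s - 1) (i + 1) := by
  intro i hi1 hid s hs1 hsm hbar
  obtain ⟨h1, h2, h3, h4, h5⟩ := hA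
  have hs' : s - 1 < m := by omega
  have hseq : s - 1 + 1 = s := by omega
  have hlt := h2 s hsm i hi1 hid
  have h3' := h3 (s-1) hs' (i+1) (by omega) (by omega)
  rw [hseq] at h3'
  have hbound := h1 s hsm i hi1 (by omega)
  have hv := h5 (s-1) hs' i hi1 hid
  rw [hseq] at hv
  have hv := hv hbar
  by_cases hb : A (s-1) (i+1) < r
  · exfalso
    by_cases hb2 : A (s-1) (i+1) + 1 < r
    · rcases h3'.1 hb2 with h | h <;> omega
    · simp only [absV] at hv
      split_ifs at hv <;> omega
  · refine ⟨by omega, ?_⟩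
    have hbb := h1 (s-1) (by omega) (i+1) (by omega) (by omega)
    simp only [absV] at hv
    split_ifs at hv <;> omega

end CTypeMinors
end
end

section
/- Assume m′+d > r. For every path p = (a^{(s)}_i) ∈ X_d(m,m′) and every i with r−m′+1 ≤ i ≤ d: a^{(s)}_i = (d−i+1)‾ for all s with m−i+r−m′+1 ≤ s ≤ m. -/
noncomputable section
open Matrix BigOperators

namespace CTypeMinors

/- **Statement 11** (Lemma 6.13): for `r - m' + 1 ≤ i ≤ d` and
`m - i + r - m' + 1 ≤ s ≤ m`, one has `a^{(s)}_i = (d-i+1)‾`, whose natural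
encoding is `2r - (d - i + 1)`. -/
theorem path_tail_constant
    (r m m' d : ℕ) (hr : 2 ≤ r) (hm'1 : 1 ≤ m') (hm'm : m' ≤ m) (hmr : m ≤ r)
    (hd1 : 1 ≤ d) (hdr : d ≤ r) (hbig : r < m' + d)
    (A : ℕ → ℕ → ℕ) (hA : IsPath r m m' d A) :
    ∀ i, r - m' + 1 ≤ i → i ≤ d → ∀ s, s ≤ m → m + r + 1 ≤ s + i + m' →
      A s i = 2*r - (d - i + 1) := by
  obtain ⟨h1, h2, h3, h4, h5⟩ := hA
  have hm'r : m' ≤ r := le_trans hm'm hmr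
  have mono : ∀ p, 1 ≤ p → p ≤ d → ∀ t, t ≤ m → ∀ s, s ≤ t → A s p ≤ A t p := by
    intro p hp1 hpd t
    induction t with
    | zero =>
      intro _ s hs
      have : s = 0 := Nat.le_zero.mp hs
      subst this; exact le_rfl
    | succ t IHt =>
      intro ht s hs
      by_cases hse : s = t + 1
      · subst hse; exact le_rfl
      · exact le_trans (IHt (by omega) s (by omega)) ((h3 t (by omega) p hp1 hpd).2)
  intro i hi
  induction i, hi using Nat.le_induction with
  | base =>
    intro hid s hsm hthr
    have hs : s = m := by omega
    subst hs
    have h4' := (h4 (r - m' + 1) (by omega) hid).2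
    rw [h4']
    simp only [rowR]
    rw [if_neg (by omega)]
    omega
  | succ i hi IH =>
    intro hjd s hsm hthr
    have hAm : A m (i+1) = 2*r - (d - (i+1) + 1) := by
      have h4' := (h4 (i+1) (by omega) hjd).2
      rw [h4']
      simp only [rowR]
      rw [if_neg (by omega)]
      omega
    have main : ∀ k s', s' + k = m → m + r + 1 ≤ s' + (i+1) + m' →
        A s' (i+1) = 2*r - (d - (i+1) + 1) := by
      intro k
      induction k with
      | zero =>
        intro s' hk _
        have : s' = m := by omega
        rw [this]; exact hAm
      | succ k IHk =>
        intro s' hk hth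
        have hsm' : s' < m := by omega
        have hnext : A (s'+1) (i+1) = 2*r - (d - (i+1) + 1) :=
          IHk (s'+1) (by omega) (by omega)
        have hprev : A (s'+1) i = 2*r - (d - i + 1) :=
          IH (by omega) (s'+1) (by omega) (by omega)
        have hbar : r ≤ A (s'+1) i := by omega
        have h5' := h5 s' hsm' i (by omega) (by omega) hbar
        rw [hprev] at h5'
        have habsprev : absV r (2*r - (d - i + 1)) = d - i + 1 := by
          simp only [absV]
          rw [if_neg (by omega)]
          omega
        rw [habsprev] at h5'
        have hlt2r : A s' (i+1) < 2*r := h1 s' (by omega) (i+1) (by omega) hjd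
        have hle : A s' (i+1) ≤ 2*r - (d - (i+1) + 1) := by
          have := mono (i+1) (by omega) hjd m le_rfl s' (by omega)
          omega
        by_cases hcase : A s' (i+1) < r
        · exfalso
          have habs : A s' (i+1) + 1 < d - i + 1 := by
            simpa only [absV, if_pos hcase] using h5'
          have h3' := (h3 s' hsm' (i+1) (by omega) hjd).1
          rcases Nat.lt_or_ge (A s' (i+1) + 1) r with hlt | hge
          · rcases h3' hlt with he | he <;> omega
          · omega
        · have habs : 2*r - A s' (i+1) < d - i + 1 := by
            simpa only [absV, if_neg hcase] using h5'
          omega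
    exact main (m - s) s (by omega) hthr

end CTypeMinors
end
end

section
/- Assume m′+d > r. For every path p = (a^{(s)}_i) ∈ X_d(m,m′) and every 1 ≤ i ≤ d: (i) if i ≤ r−m′, then #{0 ≤ s ≤ m−1 : a^{(s)}_i is unbarred and a^{(s)}_i = a^{(s+1)}_i} = m−m′; (ii) if i > r−m′, then #{0 ≤ s ≤ m−i+r−m′ : a^{(s)}_i is unbarred and a^{(s)}_i = a^{(s+1)}_i} + #{0 ≤ s ≤ m−i+r−m′ : a^{(s)}_i is barred} = m−m′. -/
noncomputable section
open Matrix BigOperators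

namespace CTypeMinors

/- **Statement 12** (Lemma 6.14): counting stationary unbarred steps and barred
entries in the `i`-sequence of a path. -/
theorem path_step_count
    (r m m' d : ℕ) (hr : 2 ≤ r) (hm'1 : 1 ≤ m') (hm'm : m' ≤ m) (hmr : m ≤ r)
    (hd1 : 1 ≤ d) (hdr : d ≤ r) (hbig : r < m' + d)
    (A : ℕ → ℕ → ℕ) (hA : IsPath r m m' d A) :
    ∀ i, 1 ≤ i → i ≤ d →
      (i + m' ≤ r →
        ((Finset.range m).filter (fun s => A s i < r ∧ A s i = A (s+1) i)).card = m - m') ∧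
      (r < i + m' →
        ((Finset.range (m + r + 1 - (i + m'))).filter
            (fun s => A s i < r ∧ A s i = A (s+1) i)).card +
        ((Finset.range (m + r + 1 - (i + m'))).filter (fun s => r ≤ A s i)).card
          = m - m') := by
  obtain ⟨hbd, hlt, hstep, hends, hbar⟩ := hA
  have mono : ∀ i, 1 ≤ i → i ≤ d → ∀ s s', s ≤ s' → s' ≤ m → A s i ≤ A s' i := by
    intro i h1 h2 s s' hss
    induction s', hss using Nat.le_induction with
    | base => intro _; exact le_rfl
    | succ n hn ih =>
      intro hsm
      exact le_trans (ih (by omega)) (hstep n (by omega) i h1 h2).2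
  have step01 : ∀ i, 1 ≤ i → i ≤ d → ∀ s, s < m → A (s+1) i < r → A (s+1) i ≤ A s i + 1 := by
    intro i h1 h2 s hs hlt'
    by_cases h : A s i + 1 < r
    · rcases (hstep s hs i h1 h2).1 h with h' | h' <;> omega
    · omega
  have count : ∀ i, 1 ≤ i → i ≤ d → ∀ n, n ≤ m → (∀ s, s < n → A (s+1) i < r) →
      ((Finset.range n).filter (fun s => A s i = A (s+1) i)).card + (A n i - A 0 i) = n
      ∧ A 0 i ≤ A n i ∧ A n i ≤ A 0 i + n := by
    intro i h1 h2 n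
    induction n with
    | zero => intro _ _; simp
    | succ n ih =>
      intro hn hs
      obtain ⟨ih1, ih2, ih3⟩ := ih (by omega) (fun s hs' => hs s (by omega))
      have hmono := (hstep n (by omega) i h1 h2).2
      have hup := step01 i h1 h2 n (by omega) (hs n (by omega))
      rw [Finset.range_add_one, Finset.filter_insert]
      by_cases hc : A n i = A (n+1) i
      · rw [if_pos hc, Finset.card_insert_of_notMem (by simp)]
        exact ⟨by omega, by omega, by omega⟩
      · rw [if_neg hc]
        exact ⟨by omega, by omega, by omega⟩
  intro i hi1 hid
  have h0i : A 0 i = i - 1 := (hends i hi1 hid).1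
  constructor
  · intro hile
    have hAm : A m i = m' + (i - 1) := by
      rw [(hends i hi1 hid).2]
      unfold rowR
      rw [if_pos (by omega)]
    have hlow : ∀ s, s ≤ m → A s i < r := by
      intro s hs
      have := mono i hi1 hid s m hs le_rfl
      omega
    have hfe : ((Finset.range m).filter (fun s => A s i < r ∧ A s i = A (s+1) i))
        = (Finset.range m).filter (fun s => A s i = A (s+1) i) := by
      apply Finset.filter_congr
      intro s hs
      simp only [Finset.mem_range] at hs
      have := hlow s (by omega)
      tauto
    obtain ⟨hc1, hc2, hc3⟩ := count i hi1 hid m le_rfl (fun s hs => hlow (s+1) (by omega))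
    rw [hfe]
    omega
  · intro hgt
    have hEx : ∀ j : ℕ, ∃ s, m ≤ s ∨ r ≤ A s j := fun j => ⟨m, Or.inl le_rfl⟩
    obtain ⟨t, htm, htmin, htle, htsp⟩ :
        ∃ t : ℕ → ℕ, (∀ j, t j ≤ m) ∧ (∀ j s, s < t j → s < m ∧ A s j < r) ∧
          (∀ j s, r ≤ A s j → t j ≤ s) ∧
          (∀ j, 1 ≤ j → j ≤ d → r < j + m' → r ≤ A (t j) j) := by
      refine ⟨fun j => Nat.find (hEx j), fun j => Nat.find_le (Or.inl le_rfl), ?_, ?_, ?_⟩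
      · intro j s hs
        have := Nat.find_min (hEx j) hs
        push_neg at this
        exact ⟨by omega, by omega⟩
      · intro j s hsj
        exact Nat.find_le (Or.inr hsj)
      · intro j h1 h2 h3
        show r ≤ A (Nat.find (hEx j)) j
        rcases Nat.find_spec (hEx j) with h | h
        · have heq : Nat.find (hEx j) = m := le_antisymm (Nat.find_le (Or.inl le_rfl)) h
          rw [heq, (hends j h1 h2).2]
          unfold rowR
          rw [if_neg (by omega)]
          omega
        · exact h
    have ht1 : ∀ j, 1 ≤ j → j ≤ d → r < j + m' → 1 ≤ t j := by
      intro j h1 h2 h3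
      by_contra h
      have h4 := htsp j h1 h2 h3
      have h5 : t j = 0 := by omega
      rw [h5, (hends j h1 h2).1] at h4
      omega
    have hcross : ∀ j, 1 ≤ j → j ≤ d → r < j + m' → A (t j - 1) j = r - 1 := by
      intro j h1 h2 h3
      have h1t := ht1 j h1 h2 h3
      have h5 := htsp j h1 h2 h3
      have h6 := htmin j (t j - 1) (by omega)
      have h7 := hstep (t j - 1) h6.1 j h1 h2
      by_cases hcase : A (t j - 1) j + 1 < r
      · rcases h7.1 hcase with h | h <;>
        · rw [show t j - 1 + 1 = t j from by omega] at h
          omega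
      · omega
    have hchain : ∀ j, 2 ≤ j → j ≤ d → r < (j-1) + m' → t j + 1 ≤ t (j-1) := by
      intro j h2 hjd h3
      have h1t := ht1 (j-1) (by omega) (by omega) h3
      have hc := hcross (j-1) (by omega) (by omega) h3
      have hm1 : t (j-1) - 1 ≤ m := by have := htm (j-1); omega
      have hlt' := hlt (t (j-1) - 1) hm1 (j-1) (by omega) (by omega)
      rw [show j - 1 + 1 = j from by omega] at hlt'
      have hge : r ≤ A (t (j-1) - 1) j := by omega
      have := htle j _ hge
      omega
    have hbound : ∀ k j, 1 ≤ j → j ≤ d → j + m' = r + 1 + k → t j + k ≤ m := by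
      intro k
      induction k with
      | zero => intro j h1 h2 h3; have := htm j; omega
      | succ k ih =>
        intro j h1 h2 h3
        have hj2 : 2 ≤ j := by omega
        have hprev := ih (j-1) (by omega) (by omega) (by omega)
        have hch := hchain j hj2 h2 (by omega)
        omega
    have hTt : t i + (i + m' - (r+1)) ≤ m := hbound (i + m' - (r+1)) i hi1 hid (by omega)
    have h1t := ht1 i hi1 hid hgt
    have hcr := hcross i hi1 hid hgt
    have hsp := htsp i hi1 hid hgt
    have hfa : (Finset.range (m + r + 1 - (i + m'))).filter (fun s => r ≤ A s i)
        = Finset.Ico (t i) (m + r + 1 - (i + m')) := by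
      ext s
      simp only [Finset.mem_filter, Finset.mem_range, Finset.mem_Ico]
      constructor
      · rintro ⟨hsT, hrs⟩
        exact ⟨htle i s hrs, hsT⟩
      · rintro ⟨hts, hsT⟩
        exact ⟨hsT, le_trans hsp (mono i hi1 hid (t i) s hts (by omega))⟩
    have hfb : (Finset.range (m + r + 1 - (i + m'))).filter
          (fun s => A s i < r ∧ A s i = A (s+1) i)
        = (Finset.range (t i - 1)).filter (fun s => A s i = A (s+1) i) := by
      ext s
      simp only [Finset.mem_filter, Finset.mem_range]
      constructor
      · rintro ⟨hsT, hsr, hst⟩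
        have hsti : s < t i := by
          by_contra h
          have := mono i hi1 hid (t i) s (by omega) (by omega)
          omega
        refine ⟨?_, hst⟩
        rcases Nat.lt_or_ge s (t i - 1) with h | h
        · exact h
        · exfalso
          have hseq : s = t i - 1 := by omega
          rw [hseq, show t i - 1 + 1 = t i from by omega, hcr] at hst
          omega
      · rintro ⟨hst, heq⟩
        have h2 := htmin i s (by omega)
        exact ⟨by omega, h2.2, heq⟩
    obtain ⟨hc1, hc2, hc3⟩ := count i hi1 hid (t i - 1) (by have := htm i; omega)
      (fun s hs => (htmin i (s+1) (by omega)).2)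
    rw [hfa, hfb, Nat.card_Ico]
    omega

end CTypeMinors
end
end

section
/- Assume m′+d > r. For every path p ∈ X_d(m,m′), every 1 ≤ i ≤ d and every 1 ≤ s ≤ m−m′: if k^{(s)}_i is unbarred then l^{(s)}_i = k^{(s)}_i + s − i − 1, and if k^{(s)}_i is barred then l^{(s)}_i = s − i + r. -/
/-!
Follow one sequence `a^{(0)}_i, a^{(1)}_i, …`. A step outside the `l`-set raises an
unbarred entry by one, the step from `r` into the barred part included, while barred
entries only make `l`-steps. So after `n` steps of which `c` lie in the `l`-set, an
unbarred entry (0-indexed encoding) equals `a^{(0)}_i + n - c`, and a barred entry has seen exactly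
`r - a^{(0)}_i` steps outside the `l`-set. At `n = l^{(s)}_i` we have `c = s - 1`, which
is the formula. The same count at the end of the path shows that the `l`-set has at
least `m - m'` elements, so `l^{(s)}_i` is a genuine element of it.
-/

noncomputable section
open Matrix BigOperators

theorem Finset.getD_sort_eq_nth (S : Finset ℕ) (k : ℕ) :
    (S.sort (· ≤ ·)).getD k 0 = Nat.nth (· ∈ S) k := by
  rw [Nat.nth_eq_getD_sort (p := (· ∈ S)) S.finite_toSet]
  simp

theorem Nat.count_mem_filter_range (p : ℕ → Prop) [DecidablePred p] {e N : ℕ} (he : e ≤ N) :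
    Nat.count (· ∈ (Finset.range N).filter p) e = Nat.count p e := by
  simp only [Nat.count_eq_card_filter_range]
  refine congrArg Finset.card (Finset.filter_congr fun t ht => ?_)
  have : t < N := (Finset.mem_range.1 ht).trans_le he
  simp [this]

theorem Nat.nth_mem_filter_range_lt_and_count (p : ℕ → Prop) [DecidablePred p] {N k : ℕ}
    (hk : k < Nat.count p N) :
    Nat.nth (· ∈ (Finset.range N).filter p) k < N ∧
      Nat.count p (Nat.nth (· ∈ (Finset.range N).filter p) k) = k := by
  set S := (Finset.range N).filter p
  have hf : (Set.ofPred (· ∈ S)).Finite := S.finite_toSet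
  have hkS : k < hf.toFinset.card := by
    rwa [show hf.toFinset = S from S.finite_toSet_toFinset, ← Nat.count_eq_card_filter_range]
  have hlt : Nat.nth (· ∈ S) k < N :=
    Finset.mem_range.1 (Finset.mem_filter.1 (Nat.nth_mem_of_lt_card hf hkS)).1
  refine ⟨hlt, ?_⟩
  rw [← Nat.count_mem_filter_range p hlt.le]
  exact Nat.count_nth_of_lt_card_finite hf hkS

namespace CTypeMinors

/-- The membership condition of the `l`-set (6.12), for the sequence `a = (A · i)`. -/
abbrev IsLStep (r : ℕ) (a : ℕ → ℕ) (t : ℕ) : Prop := (a t < r ∧ a t = a (t + 1)) ∨ r ≤ a t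

section Row

variable {r n : ℕ} {a : ℕ → ℕ}

/-- Every step outside the `l`-set raises an unbarred entry by one, and the step from `r`
into the barred entries is one of them; barred entries only produce `l`-steps. -/
theorem add_count_isLStep (h0 : a 0 < r)
    (hstep : ∀ t < n, (a t + 1 < r → a (t + 1) = a t ∨ a (t + 1) = a t + 1) ∧ a t ≤ a (t + 1)) :
    (a n < r → a n + Nat.count (IsLStep r a) n = a 0 + n) ∧
      (r ≤ a n → a 0 + n = r + Nat.count (IsLStep r a) n) := by
  induction n with
  | zero => exact ⟨fun _ => rfl, fun h => absurd h (by omega)⟩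
  | succ n ih =>
    obtain ⟨ihu, ihb⟩ := ih fun t ht => hstep t (by omega)
    obtain ⟨hjump, hmono⟩ := hstep n (by omega)
    rw [Nat.count_succ]
    by_cases hn : IsLStep r a n
    · rw [if_pos hn]
      rcases hn with ⟨hlt, heq⟩ | hle
      · exact ⟨fun _ => by rw [← heq]; omega, fun _ => by omega⟩
      · exact ⟨fun _ => by omega, fun _ => by have := ihb hle; omega⟩
    · rw [if_neg hn]
      have hlt : a n < r := by omega
      have := ihu hlt
      by_cases hr : a n + 1 < r
      · have := hjump hr
        exact ⟨fun _ => by omega, fun _ => by omega⟩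
      · exact ⟨fun _ => by omega, fun _ => by omega⟩

theorem add_le_add_count_isLStep (h0 : a 0 < r)
    (hstep : ∀ t < n, (a t + 1 < r → a (t + 1) = a t ∨ a (t + 1) = a t + 1) ∧ a t ≤ a (t + 1)) :
    a 0 + n ≤ r + Nat.count (IsLStep r a) n := by
  obtain ⟨hu, hb⟩ := add_count_isLStep h0 hstep
  rcases lt_or_ge (a n) r with h | h
  · have := hu h; omega
  · exact (hb h).le

end Row

section Path

variable {r m m' d i : ℕ} {A : ℕ → ℕ → ℕ}

theorem IsPath.row_step (hA : IsPath r m m' d A) (hi : 1 ≤ i) (hid : i ≤ d) :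
    ∀ t < m, (A t i + 1 < r → A (t + 1) i = A t i ∨ A (t + 1) i = A t i + 1) ∧
      A t i ≤ A (t + 1) i :=
  fun t ht => hA.2.2.1 t ht i hi hid

theorem IsPath.row_zero (hA : IsPath r m m' d A) (hi : 1 ≤ i) (hid : i ≤ d) :
    A 0 i = i - 1 :=
  (hA.2.2.2.1 i hi hid).1

theorem IsPath.row_last (hA : IsPath r m m' d A) (hi : 1 ≤ i) (hid : i ≤ d) :
    A m i = rowR r m' d (i - 1) :=
  (hA.2.2.2.1 i hi hid).2

theorem IsPath.row_monotoneOn (hA : IsPath r m m' d A) (hi : 1 ≤ i) (hid : i ≤ d) :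
    MonotoneOn (A · i) (Set.Iic m) :=
  monotoneOn_of_le_add_one Set.ordConnected_Iic fun t _ _ ht1 =>
    (hA.row_step hi hid t (Nat.lt_of_succ_le ht1)).2

theorem IsPath.lSet_eq_of_le (hA : IsPath r m m' d A) (hi : 1 ≤ i) (hid : i ≤ d)
    (h : i + m' ≤ r) :
    lSet r m m' A i = (Finset.range m).filter (IsLStep r (A · i)) := by
  have hAm : A m i < r := by
    rw [hA.row_last hi hid, rowR, if_pos (by omega)]
    omega
  rw [lSet, if_pos h]
  refine Finset.filter_congr fun t ht => ?_
  have : A t i ≤ A m i :=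
    hA.row_monotoneOn hi hid (Set.mem_Iic.2 (Finset.mem_range.1 ht).le) (Set.mem_Iic.2 le_rfl)
      (Finset.mem_range.1 ht).le
  simp only [IsLStep]
  omega

theorem IsPath.exists_lSet_eq_filter_range (hA : IsPath r m m' d A) (hi : 1 ≤ i)
    (hid : i ≤ d) (hdr : d ≤ r) :
    ∃ N ≤ m, lSet r m m' A i = (Finset.range N).filter (IsLStep r (A · i)) ∧
      m - m' ≤ Nat.count (IsLStep r (A · i)) N := by
  have hA0 : A 0 i = i - 1 := hA.row_zero hi hid
  have h0 : A 0 i < r := by omega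
  rcases le_or_gt (i + m') r with h | h
  · refine ⟨m, le_rfl, hA.lSet_eq_of_le hi hid h, ?_⟩
    have hAm : A m i = m' + (i - 1) := by
      rw [hA.row_last hi hid, rowR, if_pos (by omega)]
    have := add_count_isLStep h0 (hA.row_step hi hid)
    beta_reduce at this
    have := this.1 (by omega)
    omega
  · refine ⟨m + r + 1 - (i + m'), by omega, by rw [lSet, if_neg (by omega)], ?_⟩
    have := add_le_add_count_isLStep (n := m + r + 1 - (i + m')) h0
      fun t ht => hA.row_step hi hid t (by omega)
    beta_reduce at this
    omega

end Path

/- With `k` encoded 0-indexed (value `kv + 1` when unbarred), the paper's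
`l = k + s - i - 1` reads `lv + i = kv + s`, and `l = s - i + r` reads `lv + i = s + r`. -/
theorem path_l_formula_general
    (r m m' d : ℕ) (hdr : d ≤ r)
    (A : ℕ → ℕ → ℕ) (hA : IsPath r m m' d A) :
    ∀ i, 1 ≤ i → i ≤ d → ∀ s, 1 ≤ s → s ≤ m - m' →
      (kv r m m' A i s < r → lv r m m' A i s + i = kv r m m' A i s + s) ∧
      (r ≤ kv r m m' A i s → lv r m m' A i s + i = s + r) := by
  intro i hi hid s hs hsm
  obtain ⟨N, hNm, hlSet, hcard⟩ := hA.exists_lSet_eq_filter_range hi hid hdr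
  have hlv : lv r m m' A i s =
      Nat.nth (· ∈ (Finset.range N).filter (IsLStep r (A · i))) (s - 1) := by
    rw [lv, Finset.getD_sort_eq_nth, hlSet]
  obtain ⟨hlvN, hcount⟩ :=
    Nat.nth_mem_filter_range_lt_and_count (IsLStep r (A · i)) (N := N) (k := s - 1) (by omega)
  rw [← hlv] at hlvN hcount
  have h0 : A 0 i = i - 1 := hA.row_zero hi hid
  obtain ⟨hu, hb⟩ := add_count_isLStep (n := lv r m m' A i s) (by omega)
    fun t ht => hA.row_step hi hid t (by omega)
  rw [kv]
  exact ⟨fun h => by have := hu h; omega, fun h => by have := hb h; omega⟩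

theorem path_l_formula
    (r m m' d : ℕ) (hr : 2 ≤ r) (hm'1 : 1 ≤ m') (hm'm : m' ≤ m) (hmr : m ≤ r)
    (hd1 : 1 ≤ d) (hdr : d ≤ r) (hbig : r < m' + d)
    (A : ℕ → ℕ → ℕ) (hA : IsPath r m m' d A) :
    ∀ i, 1 ≤ i → i ≤ d → ∀ s, 1 ≤ s → s ≤ m - m' →
      (kv r m m' A i s < r → lv r m m' A i s + i = kv r m m' A i s + s) ∧
      (r ≤ kv r m m' A i s → lv r m m' A i s + i = s + r) :=
  path_l_formula_general r m m' d hdr A hA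

end CTypeMinors
end
end

section
/- Assume m′+d > r. For every path p ∈ X_d(m,m′), every 1 ≤ s ≤ m−m′ and every 1 ≤ i ≤ d−1: if k^{(s)}_i is unbarred then k^{(s)}_i < k^{(s)}_{i+1} in the order of J and l^{(s)}_i ≤ l^{(s)}_{i+1}; if k^{(s)}_i is barred then k^{(s)}_i < k^{(s)}_{i+1} in the order of J and l^{(s)}_i = l^{(s)}_{i+1} + 1. -/
/-!
Encode `a^{(t)}_i` as `A t i`. While the `i`-th sequence is unbarred it either rests or rises by
one, so `A t i + #(rests before t) + 1 = i + t`. Once it is barred, every time up to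
`m + r - (i + m')` lies in its `l`-set, and the same count (the sequence bars from the value
`r - 1`) shows that `i + t - r - 1` of its `l`-times precede such a `t`. Hence an unbarred
`k^{(s)}_i` has `k^{(s)}_i + s = i + l^{(s)}_i`, and a barred one has `i + l^{(s)}_i = r + s`.

For unbarred `k^{(s)}_i`, the strict inequality `A t i < A t (i+1)` read through the count formula
says that as long as the `(i+1)`-th sequence is unbarred, the `i`-th one has rested at least as
often; so it reaches its `s`-th rest no later, and `l^{(s)}_i ≤ l^{(s)}_{i+1}`. For barred
`k^{(s)}_i = A l i`, condition (v) makes `A (l-1) (i+1)` barred and larger than `A l i`, and the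
count formula makes `l - 1` the `s`-th `l`-time of the `(i+1)`-th sequence.
-/

noncomputable section
open Matrix BigOperators

namespace CTypeMinors

theorem _root_.Finset.sort_getD_eq_nth (F : Finset ℕ) (n : ℕ) :
    (F.sort (· ≤ ·)).getD n 0 = Nat.nth (· ∈ F) n := by
  have hf : (Set.ofPred (· ∈ F)).Finite := F.finite_toSet
  rw [Nat.nth_eq_getD_sort hf]
  congr
  ext
  simp

theorem _root_.Finset.nth_mem_and_count_nth {F : Finset ℕ} {n : ℕ} (hn : n < F.card) :
    Nat.nth (· ∈ F) n ∈ F ∧ Nat.count (· ∈ F) (Nat.nth (· ∈ F) n) = n := by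
  have hF : ∀ hf : (Set.ofPred (· ∈ F)).Finite, n < hf.toFinset.card := by
    intro hf
    convert hn
    ext
    simp
  exact ⟨Nat.nth_mem n hF, Nat.count_nth hF⟩

theorem _root_.Finset.card_eq_count_mem {F : Finset ℕ} {n : ℕ} (h : ∀ x ∈ F, x < n) :
    F.card = Nat.count (· ∈ F) n := by
  rw [Nat.count_eq_card_filter_range]
  congr
  ext x
  simpa using fun hx => h x hx

theorem _root_.Nat.count_congr_of_lt {p q : ℕ → Prop} [DecidablePred p] [DecidablePred q]
    {n : ℕ} (h : ∀ k < n, p k ↔ q k) : Nat.count p n = Nat.count q n :=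
  le_antisymm (Nat.count_mono_left fun k hk => (h k hk).1)
    (Nat.count_mono_left fun k hk => (h k hk).2)

-- Since `sInf ∅ = 0`, this is the first barred time only when the sequence ends barred.
def barTime (r : ℕ) (A : ℕ → ℕ → ℕ) (i : ℕ) : ℕ := sInf {s | r ≤ A s i}

section lSet

variable {r m m' : ℕ} {A : ℕ → ℕ → ℕ} {i s t : ℕ}

theorem apply_lt_of_lt_barTime (ht : t < barTime r A i) : A t i < r :=
  not_le.1 (Nat.notMem_of_lt_sInf (s := {s | r ≤ A s i}) ht)

theorem lt_of_mem_lSet (ht : t ∈ lSet r m m' A i) : t < m := by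
  unfold lSet at ht
  split_ifs at ht <;> simp only [Finset.mem_filter, Finset.mem_range] at ht <;> omega

theorem add_lt_of_mem_lSet (h : r < i + m') (ht : t ∈ lSet r m m' A i) :
    t + (i + m') < m + r + 1 := by
  rw [lSet, if_neg (by omega)] at ht
  simp only [Finset.mem_filter, Finset.mem_range] at ht
  omega

theorem mem_lSet_of_barred (h : r < i + m') (hb : r ≤ A t i) (ht : t + (i + m') < m + r + 1) :
    t ∈ lSet r m m' A i := by
  rw [lSet, if_neg (by omega)]
  simp only [Finset.mem_filter, Finset.mem_range]
  omega

theorem lv_eq_of_count (ht : t ∈ lSet r m m' A i)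
    (hc : Nat.count (· ∈ lSet r m m' A i) t = s - 1) : lv r m m' A i s = t := by
  rw [lv, Finset.sort_getD_eq_nth, ← hc]
  exact Nat.nth_count ht

end lSet

namespace IsPath

variable {r m m' d : ℕ} {A : ℕ → ℕ → ℕ} {i s : ℕ}

theorem monotone_col (hA : IsPath r m m' d A) (hi1 : 1 ≤ i) (hid : i ≤ d) {u v : ℕ}
    (huv : u ≤ v) (hv : v ≤ m) : A u i ≤ A v i := by
  induction v, huv using Nat.le_induction with
  | base => rfl
  | succ v _ ih => exact (ih (by omega)).trans (hA.2.2.1 v (by omega) i hi1 hid).2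

theorem apply_add_count_rest (hA : IsPath r m m' d A) (hi1 : 1 ≤ i) (hid : i ≤ d) {t : ℕ}
    (ht : t ≤ m) (hAt : A t i < r) :
    A t i + Nat.count (fun u => A u i = A (u + 1) i) t + 1 = i + t := by
  induction t with
  | zero => simp [(hA.2.2.2.1 i hi1 hid).1]; omega
  | succ t ih =>
    obtain ⟨hstep, hle⟩ := hA.2.2.1 t (by omega) i hi1 hid
    have := ih (by omega) (by omega)
    rw [Nat.count_succ]
    split_ifs with hrest
    · omega
    · rcases hstep (by omega) with h | h <;> omega

theorem le_add_one_of_barred_succ (hA : IsPath r m m' d A) (hi1 : 1 ≤ i) (hid : i ≤ d)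
    (hs : s < m) (hb : r ≤ A (s + 1) i) : r ≤ A s i + 1 := by
  obtain ⟨hstep, -⟩ := hA.2.2.1 s hs i hi1 hid
  by_contra! h
  rcases hstep h with h' | h' <;> omega

theorem lt_apply_succ_of_barred (hA : IsPath r m m' d A) (hi1 : 1 ≤ i) (hid : i < d)
    (hs : s < m) (hb : r ≤ A (s + 1) i) : r ≤ A s (i + 1) ∧ A (s + 1) i < A s (i + 1) := by
  have hlt := hA.2.1 s hs.le i hi1 hid
  have hbar : r ≤ A s (i + 1) := by
    have := hA.le_add_one_of_barred_succ hi1 hid.le hs hb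
    omega
  have hv := hA.2.2.2.2 s hs i hi1 hid hb
  have h1 := hA.1 (s + 1) hs i hi1 hid.le
  have h2 := hA.1 s hs.le (i + 1) (by omega) hid
  unfold absV at hv
  rw [if_neg (by omega), if_neg (by omega)] at hv
  exact ⟨hbar, by omega⟩

theorem le_apply_final_iff (hA : IsPath r m m' d A) (hdr : d ≤ r) (hi1 : 1 ≤ i)
    (hid : i ≤ d) : r ≤ A m i ↔ r < i + m' := by
  rw [(hA.2.2.2.1 i hi1 hid).2, rowR]
  split_ifs <;> omega

theorem barTime_spec (hA : IsPath r m m' d A) (hdr : d ≤ r) (hi1 : 1 ≤ i) (hid : i ≤ d)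
    (h : r < i + m') : 0 < barTime r A i ∧ barTime r A i ≤ m ∧ r ≤ A (barTime r A i) i := by
  have hm : r ≤ A m i := (hA.le_apply_final_iff hdr hi1 hid).2 h
  have hT : r ≤ A (barTime r A i) i := Nat.sInf_mem (s := {s | r ≤ A s i}) ⟨m, hm⟩
  refine ⟨Nat.pos_of_ne_zero fun h0 => ?_, Nat.sInf_le hm, hT⟩
  rw [h0, (hA.2.2.2.1 i hi1 hid).1] at hT
  omega

theorem barTime_succ_lt (hA : IsPath r m m' d A) (hdr : d ≤ r) (hi1 : 1 ≤ i) (hid : i < d)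
    (h : r < i + m') : barTime r A (i + 1) < barTime r A i := by
  obtain ⟨hT0, hTm, hT⟩ := hA.barTime_spec hdr hi1 hid.le h
  have hb := (hA.lt_apply_succ_of_barred hi1 hid (s := barTime r A i - 1) (by omega)
    (by rwa [Nat.sub_add_cancel hT0])).1
  have := Nat.sInf_le (s := {s | r ≤ A s (i + 1)}) hb
  exact lt_of_le_of_lt this (by omega)

theorem barTime_add_le (hA : IsPath r m m' d A) (hdr : d ≤ r) (hm'r : m' ≤ r) (hi1 : 1 ≤ i)
    (hid : i ≤ d) (h : r < i + m') : barTime r A i + (i + m') ≤ m + r + 1 := by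
  induction i, hi1 using Nat.le_induction with
  | base => have := (hA.barTime_spec hdr le_rfl hid h).2.1; omega
  | succ i hi1 ih =>
    by_cases hc : r < i + m'
    · have := hA.barTime_succ_lt hdr hi1 hid hc
      have := ih (by omega) hc
      omega
    · have := (hA.barTime_spec hdr (by omega) hid h).2.1
      omega

theorem mem_lSet_iff_of_unbarred (hA : IsPath r m m' d A) (hdr : d ≤ r) (hm'r : m' ≤ r)
    (hi1 : 1 ≤ i) (hid : i ≤ d) {u : ℕ} (hu : u < m) (hAu : A u i < r) :
    u ∈ lSet r m m' A i ↔ A u i = A (u + 1) i := by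
  unfold lSet
  split_ifs with hc
  · simp [hu]
  · have hW := hA.barTime_add_le hdr hm'r hi1 hid (by omega)
    have hT : u < barTime r A i := by
      by_contra! hT
      have := hA.monotone_col hi1 hid hT hu.le
      have := (hA.barTime_spec hdr hi1 hid (by omega)).2.2
      omega
    simp only [Finset.mem_filter, Finset.mem_range]
    omega

theorem count_lSet_of_unbarred (hA : IsPath r m m' d A) (hdr : d ≤ r) (hm'r : m' ≤ r)
    (hi1 : 1 ≤ i) (hid : i ≤ d) {t : ℕ} (ht : t ≤ m) (hAt : A t i < r) :
    Nat.count (· ∈ lSet r m m' A i) t = Nat.count (fun u => A u i = A (u + 1) i) t :=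
  Nat.count_congr_of_lt fun u hu =>
    hA.mem_lSet_iff_of_unbarred hdr hm'r hi1 hid (by omega)
      ((hA.monotone_col hi1 hid hu.le ht).trans_lt hAt)

theorem count_lSet_of_barred (hA : IsPath r m m' d A) (hdr : d ≤ r) (hm'r : m' ≤ r)
    (hi1 : 1 ≤ i) (hid : i ≤ d) (h : r < i + m') {t : ℕ} (hT : barTime r A i ≤ t)
    (ht : t + (i + m') ≤ m + r + 1) : Nat.count (· ∈ lSet r m m' A i) t + r + 1 = i + t := by
  obtain ⟨hT0, hTm, hTr⟩ := hA.barTime_spec hdr hi1 hid h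
  induction t, hT using Nat.le_induction with
  | base =>
    obtain ⟨T, hT1⟩ : ∃ T, T + 1 = barTime r A i := ⟨_, Nat.sub_add_cancel hT0⟩
    have hAT : A T i < r := apply_lt_of_lt_barTime (by omega)
    have hcross := hA.le_add_one_of_barred_succ hi1 hid (s := T) (by omega) (by rwa [hT1])
    have hnot : T ∉ lSet r m m' A i := by
      rw [hA.mem_lSet_iff_of_unbarred hdr hm'r hi1 hid (by omega) hAT, hT1]
      omega
    have hv := hA.apply_add_count_rest hi1 hid (t := T) (by omega) hAT
    rw [← hT1, Nat.count_succ, if_neg hnot,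
      hA.count_lSet_of_unbarred hdr hm'r hi1 hid (by omega) hAT]
    omega
  | succ t hTt ih =>
    have hmem : t ∈ lSet r m m' A i :=
      mem_lSet_of_barred h (hTr.trans (hA.monotone_col hi1 hid hTt (by omega))) (by omega)
    rw [Nat.count_succ, if_pos hmem]
    have := ih (by omega)
    omega

theorem card_lSet (hA : IsPath r m m' d A) (hdr : d ≤ r) (hm'r : m' ≤ r) (hi1 : 1 ≤ i)
    (hid : i ≤ d) : (lSet r m m' A i).card = m - m' := by
  by_cases h : r < i + m'
  · have hW := hA.barTime_add_le hdr hm'r hi1 hid h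
    rw [Finset.card_eq_count_mem fun u hu =>
      Nat.lt_sub_iff_add_lt.2 (add_lt_of_mem_lSet h hu)]
    have := hA.count_lSet_of_barred hdr hm'r hi1 hid h (t := m + r + 1 - (i + m'))
      (by omega) (by omega)
    omega
  · have hAm : A m i < r := not_le.1 fun h' => h ((hA.le_apply_final_iff hdr hi1 hid).1 h')
    rw [Finset.card_eq_count_mem fun u hu => lt_of_mem_lSet hu,
      hA.count_lSet_of_unbarred hdr hm'r hi1 hid le_rfl hAm]
    have := hA.apply_add_count_rest hi1 hid le_rfl hAm
    have hfin := (hA.2.2.2.1 i hi1 hid).2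
    rw [rowR, if_pos (by omega)] at hfin
    omega

theorem lv_mem_and_count (hA : IsPath r m m' d A) (hdr : d ≤ r) (hm'r : m' ≤ r) (hi1 : 1 ≤ i)
    (hid : i ≤ d) (hs1 : 1 ≤ s) (hs : s ≤ m - m') :
    lv r m m' A i s ∈ lSet r m m' A i ∧
      Nat.count (· ∈ lSet r m m' A i) (lv r m m' A i s) = s - 1 := by
  rw [lv, Finset.sort_getD_eq_nth]
  exact Finset.nth_mem_and_count_nth (by rw [hA.card_lSet hdr hm'r hi1 hid]; omega)

theorem lv_spec_of_unbarred (hA : IsPath r m m' d A) (hdr : d ≤ r) (hm'r : m' ≤ r)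
    (hi1 : 1 ≤ i) (hid : i ≤ d) (hs1 : 1 ≤ s) (hs : s ≤ m - m')
    (hk : A (lv r m m' A i s) i < r) :
    A (lv r m m' A i s) i = A (lv r m m' A i s + 1) i ∧
      A (lv r m m' A i s) i + s = i + lv r m m' A i s := by
  obtain ⟨hmem, hcount⟩ := hA.lv_mem_and_count hdr hm'r hi1 hid hs1 hs
  have hlm := lt_of_mem_lSet hmem
  have hv := hA.apply_add_count_rest hi1 hid hlm.le hk
  rw [← hA.count_lSet_of_unbarred hdr hm'r hi1 hid hlm.le hk, hcount] at hv
  exact ⟨(hA.mem_lSet_iff_of_unbarred hdr hm'r hi1 hid hlm hk).1 hmem, by omega⟩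

theorem lv_spec_of_barred (hA : IsPath r m m' d A) (hdr : d ≤ r) (hm'r : m' ≤ r)
    (hi1 : 1 ≤ i) (hid : i ≤ d) (hs1 : 1 ≤ s) (hs : s ≤ m - m')
    (hk : r ≤ A (lv r m m' A i s) i) :
    r < i + m' ∧ barTime r A i ≤ lv r m m' A i s ∧
      lv r m m' A i s + (i + m') < m + r + 1 ∧ i + lv r m m' A i s = r + s := by
  obtain ⟨hmem, hcount⟩ := hA.lv_mem_and_count hdr hm'r hi1 hid hs1 hs
  have h : r < i + m' := (hA.le_apply_final_iff hdr hi1 hid).1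
    (hk.trans (hA.monotone_col hi1 hid (lt_of_mem_lSet hmem).le le_rfl))
  have hT : barTime r A i ≤ lv r m m' A i s := Nat.sInf_le (s := {s | r ≤ A s i}) hk
  have hW := add_lt_of_mem_lSet h hmem
  have := hA.count_lSet_of_barred hdr hm'r hi1 hid h hT hW.le
  exact ⟨h, hT, hW, by omega⟩

theorem count_rest_succ_le (hA : IsPath r m m' d A) (hi1 : 1 ≤ i) (hid : i < d) {t : ℕ}
    (ht : t ≤ m) (hAt : A t (i + 1) < r) :
    Nat.count (fun u => A u (i + 1) = A (u + 1) (i + 1)) t ≤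
      Nat.count (fun u => A u i = A (u + 1) i) t := by
  have hlt := hA.2.1 t ht i hi1 hid
  have := hA.apply_add_count_rest hi1 hid.le ht (hlt.trans hAt)
  have := hA.apply_add_count_rest (i := i + 1) (by omega) hid ht hAt
  omega

theorem lv_le_lv_succ (hA : IsPath r m m' d A) (hdr : d ≤ r) (hm'r : m' ≤ r) (hi1 : 1 ≤ i)
    (hid : i < d) (hs1 : 1 ≤ s) (hs : s ≤ m - m')
    (hk : A (lv r m m' A (i + 1) s) (i + 1) < r) :
    lv r m m' A i s ≤ lv r m m' A (i + 1) s := by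
  set l := lv r m m' A (i + 1) s
  obtain ⟨hrest, -⟩ := hA.lv_spec_of_unbarred hdr hm'r (i := i + 1) (by omega) hid hs1 hs hk
  obtain ⟨hmem, hcount⟩ := hA.lv_mem_and_count hdr hm'r (i := i + 1) (by omega) hid hs1 hs
  have hlm : l + 1 ≤ m := lt_of_mem_lSet hmem
  have hAl : A (l + 1) (i + 1) < r := hrest ▸ hk
  have hAli : A (l + 1) i < r := (hA.2.1 (l + 1) hlm i hi1 hid).trans hAl
  have hc : Nat.count (· ∈ lSet r m m' A (i + 1)) (l + 1) = s := by
    rw [Nat.count_succ, if_pos hmem, hcount]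
    omega
  rw [hA.count_lSet_of_unbarred hdr hm'r (i := i + 1) (by omega) hid hlm hAl] at hc
  have hle := hA.count_rest_succ_le hi1 hid hlm hAl
  rw [← hA.count_lSet_of_unbarred hdr hm'r hi1 hid.le hlm hAli] at hle
  rw [lv, Finset.sort_getD_eq_nth]
  exact Nat.lt_succ_iff.1 (Nat.nth_lt_of_lt_count (n := l + 1) (by omega))

theorem kv_lt_and_lv_le_of_unbarred (hA : IsPath r m m' d A) (hdr : d ≤ r) (hm'r : m' ≤ r)
    (hi1 : 1 ≤ i) (hid : i < d) (hs1 : 1 ≤ s) (hs : s ≤ m - m') (hk : kv r m m' A i s < r) :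
    kv r m m' A i s < kv r m m' A (i + 1) s ∧ lv r m m' A i s ≤ lv r m m' A (i + 1) s := by
  unfold kv at *
  obtain ⟨-, hv⟩ := hA.lv_spec_of_unbarred hdr hm'r hi1 hid.le hs1 hs hk
  by_cases hk2 : A (lv r m m' A (i + 1) s) (i + 1) < r
  · have hle := hA.lv_le_lv_succ hdr hm'r hi1 hid hs1 hs hk2
    obtain ⟨-, hv2⟩ :=
      hA.lv_spec_of_unbarred hdr hm'r (i := i + 1) (by omega) hid hs1 hs hk2
    omega
  · obtain ⟨-, -, -, hl2⟩ :=
      hA.lv_spec_of_barred hdr hm'r (i := i + 1) (by omega) hid hs1 hs (not_lt.1 hk2)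
    omega

theorem kv_lt_and_lv_eq_of_barred (hA : IsPath r m m' d A) (hdr : d ≤ r) (hm'r : m' ≤ r)
    (hi1 : 1 ≤ i) (hid : i < d) (hs1 : 1 ≤ s) (hs : s ≤ m - m') (hk : r ≤ kv r m m' A i s) :
    kv r m m' A i s < kv r m m' A (i + 1) s ∧ lv r m m' A i s = lv r m m' A (i + 1) s + 1 := by
  unfold kv at *
  obtain ⟨h, hT, hW, hl⟩ := hA.lv_spec_of_barred hdr hm'r hi1 hid.le hs1 hs hk
  set l := lv r m m' A i s
  have hTs := hA.barTime_succ_lt hdr hi1 hid h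
  have hl1 : l - 1 + 1 = l := by omega
  obtain ⟨hb, hlt⟩ := hA.lt_apply_succ_of_barred hi1 hid (s := l - 1) (by omega) (by rwa [hl1])
  have hc := hA.count_lSet_of_barred hdr hm'r (i := i + 1) (by omega) hid (by omega)
    (t := l - 1) (by omega) (by omega)
  have hlv : lv r m m' A (i + 1) s = l - 1 :=
    lv_eq_of_count (mem_lSet_of_barred (by omega) hb (by omega)) (by omega)
  rw [hlv, ← hl1]
  exact ⟨hlt, by omega⟩

end IsPath

theorem path_kl_monotone_general
    (r m m' d : ℕ) (hm'm : m' ≤ m) (hmr : m ≤ r) (hdr : d ≤ r)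
    (A : ℕ → ℕ → ℕ) (hA : IsPath r m m' d A) :
    ∀ s, 1 ≤ s → s ≤ m - m' → ∀ i, 1 ≤ i → i < d →
      (kv r m m' A i s < r →
        kv r m m' A i s < kv r m m' A (i+1) s ∧
        lv r m m' A i s ≤ lv r m m' A (i+1) s) ∧
      (r ≤ kv r m m' A i s →
        kv r m m' A i s < kv r m m' A (i+1) s ∧
        lv r m m' A i s = lv r m m' A (i+1) s + 1) := by
  intro s hs1 hs i hi1 hid
  have hm'r : m' ≤ r := hm'm.trans hmr
  exact ⟨hA.kv_lt_and_lv_le_of_unbarred hdr hm'r hi1 hid hs1 hs,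
    hA.kv_lt_and_lv_eq_of_barred hdr hm'r hi1 hid hs1 hs⟩

theorem path_kl_monotone
    (r m m' d : ℕ) (hr : 2 ≤ r) (hm'1 : 1 ≤ m') (hm'm : m' ≤ m) (hmr : m ≤ r)
    (hd1 : 1 ≤ d) (hdr : d ≤ r) (hbig : r < m' + d)
    (A : ℕ → ℕ → ℕ) (hA : IsPath r m m' d A) :
    ∀ s, 1 ≤ s → s ≤ m - m' → ∀ i, 1 ≤ i → i < d →
      (kv r m m' A i s < r →
        kv r m m' A i s < kv r m m' A (i+1) s ∧
        lv r m m' A i s ≤ lv r m m' A (i+1) s) ∧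
      (r ≤ kv r m m' A i s →
        kv r m m' A i s < kv r m m' A (i+1) s ∧
        lv r m m' A i s = lv r m m' A (i+1) s + 1) :=
  path_kl_monotone_general r m m' d hm'm hmr hdr A hA

end CTypeMinors
end
end
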